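/- arXiv:2307.06512 — 9 statements merged into one kernel-verified Lean document; each statement's English description precedes it below -/
import Mathlib

section
/- Let $X$ be a compact metric space and let $\xi=(x_i)_{i\ge0}$, $\xi'=(y_i)_{i\ge0}$ be sequences of points in $X$. If $\lim_{n\to\infty}\frac{1}{n}\sum_{i=0}^{n-1}d(x_i,y_i)=0$, then $\overline{\omega}(\xi)=\overline{\omega}(\xi')$. -/
open Filter Metric Set
open scoped Classical Topology

noncomputable def upperDensity (A : Set ℕ) : ℝ :=
  Filter.limsup
    (fun n : ℕ => (((Finset.range n).filter (fun i => i ∈ A)).card : ℝ) / n) Filter.atTop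

def HasDensityOne (A : Set ℕ) : Prop :=
  Filter.Tendsto
    (fun n : ℕ => (((Finset.range n).filter (fun i => i ∈ A)).card : ℝ) / n) Filter.atTop (nhds 1)

def omegaBarSeq {X : Type*} [MetricSpace X] (x : ℕ → X) : Set X :=
  {y | ∀ ε > 0, 0 < upperDensity {i | dist (x i) y < ε}}

def omegaBar {X : Type*} [MetricSpace X] (f : X → X) (x : X) : Set X :=
  omegaBarSeq (fun i => f^[i] x)

/-!
If `z` is visited along `x` with positive upper density within `ε / 2`, then at those times
`y` is within `ε` of `z`, except on the set of times where `dist (x i) (y i) ≥ ε / 2`.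
By Markov's inequality that exceptional set has density `0` when the Cesàro means of
`dist (x i) (y i)` tend to `0`, and upper density is subadditive, so `z` is visited along `y`
with positive upper density within `ε`. The hypothesis is symmetric in `x` and `y`.
-/

noncomputable def partialDensity (A : Set ℕ) (n : ℕ) : ℝ :=
  (((Finset.range n).filter (fun i => i ∈ A)).card : ℝ) / n

namespace partialDensity

lemma nonneg (A : Set ℕ) (n : ℕ) : 0 ≤ partialDensity A n := by
  unfold partialDensity; positivity

lemma le_one (A : Set ℕ) (n : ℕ) : partialDensity A n ≤ 1 := by
  unfold partialDensity
  refine div_le_one_of_le₀ ?_ n.cast_nonneg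
  exact_mod_cast (Finset.card_filter_le _ _).trans (Finset.card_range n).le

lemma isBoundedUnder_le (A : Set ℕ) : IsBoundedUnder (· ≤ ·) atTop (partialDensity A) :=
  isBoundedUnder_of ⟨1, le_one A⟩

lemma isBoundedUnder_ge (A : Set ℕ) : IsBoundedUnder (· ≥ ·) atTop (partialDensity A) :=
  isBoundedUnder_of ⟨0, nonneg A⟩

lemma le_add_of_subset_union {A B C : Set ℕ} (h : A ⊆ B ∪ C) (n : ℕ) :
    partialDensity A n ≤ partialDensity B n + partialDensity C n := by
  unfold partialDensity
  rw [← add_div]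
  gcongr
  rw [← Nat.cast_add, Nat.cast_le]
  refine (Finset.card_le_card ?_).trans (Finset.card_union_le _ _)
  rw [← Finset.filter_or]
  exact Finset.monotone_filter_right _ fun i _ hi => h hi

/-- Markov's inequality for the counting measure on `{0, …, n - 1}`. -/
lemma le_cesaro_div {f : ℕ → ℝ} (hf : ∀ i, 0 ≤ f i) {δ : ℝ} (hδ : 0 < δ) (n : ℕ) :
    partialDensity {i | δ ≤ f i} n ≤ (∑ i ∈ Finset.range n, f i) / n / δ := by
  rw [le_div_iff₀ hδ, partialDensity, div_mul_eq_mul_div]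
  gcongr
  calc (((Finset.range n).filter (fun i => i ∈ {i | δ ≤ f i})).card : ℝ) * δ
      = ∑ _i ∈ (Finset.range n).filter (fun i => δ ≤ f i), δ := by
        simp [Finset.sum_const, nsmul_eq_mul]
    _ ≤ ∑ i ∈ (Finset.range n).filter (fun i => δ ≤ f i), f i :=
        Finset.sum_le_sum fun i hi => (Finset.mem_filter.mp hi).2
    _ ≤ ∑ i ∈ Finset.range n, f i :=
        Finset.sum_le_sum_of_subset_of_nonneg (Finset.filter_subset _ _) fun i _ _ => hf i

lemma tendsto_zero_of_tendsto_cesaro {f : ℕ → ℝ} (hf : ∀ i, 0 ≤ f i)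
    (hcesaro : Tendsto (fun n : ℕ => (∑ i ∈ Finset.range n, f i) / n) atTop (𝓝 0))
    {δ : ℝ} (hδ : 0 < δ) :
    Tendsto (partialDensity {i | δ ≤ f i}) atTop (𝓝 0) :=
  squeeze_zero (nonneg _) (le_cesaro_div hf hδ) (by simpa using hcesaro.div_const δ)

end partialDensity

lemma upperDensity_le_add_of_subset_union {A B C : Set ℕ} (h : A ⊆ B ∪ C) :
    upperDensity A ≤ upperDensity B + upperDensity C := by
  open partialDensity in
  calc upperDensity A ≤ limsup (partialDensity B + partialDensity C) atTop :=
        limsup_le_limsup (.of_forall (le_add_of_subset_union h))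
          (isBoundedUnder_ge A).isCoboundedUnder_le
          (isBoundedUnder_le_add (isBoundedUnder_le B) (isBoundedUnder_le C))
    _ ≤ upperDensity B + upperDensity C :=
        limsup_add_le (isBoundedUnder_ge B) (isBoundedUnder_le B)
          (isBoundedUnder_ge C).isCoboundedUnder_le (isBoundedUnder_le C)

lemma omegaBarSeq_subset_of_tendsto_cesaro_dist {X : Type*} [MetricSpace X] {x y : ℕ → X}
    (h : Tendsto (fun n : ℕ => (∑ i ∈ Finset.range n, dist (x i) (y i)) / n) atTop (𝓝 0)) :
    omegaBarSeq x ⊆ omegaBarSeq y := by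
  intro z hz ε hε
  have hsplit : {i | dist (x i) z < ε / 2} ⊆
      {i | dist (y i) z < ε} ∪ {i | ε / 2 ≤ dist (x i) (y i)} := by
    intro i (hi : dist (x i) z < ε / 2)
    by_cases hxy : ε / 2 ≤ dist (x i) (y i)
    · exact Or.inr hxy
    · left
      show dist (y i) z < ε
      linarith [dist_triangle_left (y i) z (x i)]
  have hexceptional : upperDensity {i | ε / 2 ≤ dist (x i) (y i)} = 0 :=
    (partialDensity.tendsto_zero_of_tendsto_cesaro (fun _ => dist_nonneg) h
      (half_pos hε)).limsup_eq
  have := upperDensity_le_add_of_subset_union hsplit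
  linarith [hz (ε / 2) (half_pos hε)]

theorem stmt1_general {X : Type*} [MetricSpace X] (x y : ℕ → X)
    (h : Filter.Tendsto (fun n : ℕ => (∑ i ∈ Finset.range n, dist (x i) (y i)) / n)
      Filter.atTop (nhds 0)) :
    omegaBarSeq x = omegaBarSeq y := by
  have h' : Tendsto (fun n : ℕ => (∑ i ∈ Finset.range n, dist (y i) (x i)) / n) atTop (𝓝 0) := by
    simpa only [dist_comm] using h
  exact (omegaBarSeq_subset_of_tendsto_cesaro_dist h).antisymm
    (omegaBarSeq_subset_of_tendsto_cesaro_dist h')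

theorem stmt1 {X : Type*} [MetricSpace X] [CompactSpace X] (x y : ℕ → X)
    (h : Filter.Tendsto (fun n : ℕ => (∑ i ∈ Finset.range n, dist (x i) (y i)) / n)
      Filter.atTop (nhds 0)) :
    omegaBarSeq x = omegaBarSeq y :=
  stmt1_general x y h
end

section
/- Let $X$ be a compact metric space and $f:X\to X$ a continuous map. For any $x,y\in X$, if $\lim_{n\to\infty}\frac{1}{n}\sum_{i=0}^{n-1}d(f^i(x),f^i(y))=0$, then $\overline{\omega}(x,f)=\overline{\omega}(y,f)$. -/
/-! If the Cesàro averages of `d(xᵢ, yᵢ)` tend to `0`, then by Markov's inequality the set of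
times where `d(xᵢ, yᵢ) ≥ ε/2` has upper density `0`. Removing it from a set of times of positive
upper density where `xᵢ` is `ε/2`-close to `z` leaves a set of the same upper density on which
`yᵢ` is `ε`-close to `z`. -/

open Filter Metric Set
open scoped Classical Topology

noncomputable def countingRatio (A : Set ℕ) (n : ℕ) : ℝ :=
  (((Finset.range n).filter (fun i => i ∈ A)).card : ℝ) / n

lemma countingRatio_nonneg (A : Set ℕ) (n : ℕ) : 0 ≤ countingRatio A n := by
  unfold countingRatio; positivity

lemma countingRatio_le_one (A : Set ℕ) (n : ℕ) : countingRatio A n ≤ 1 := by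
  unfold countingRatio
  apply div_le_one_of_le₀ _ n.cast_nonneg
  exact_mod_cast (Finset.card_filter_le _ _).trans (Finset.card_range n).le

lemma countingRatio_mono {A B : Set ℕ} (hAB : A ⊆ B) (n : ℕ) :
    countingRatio A n ≤ countingRatio B n := by
  unfold countingRatio
  gcongr

lemma countingRatio_le_diff_add (A B : Set ℕ) (n : ℕ) :
    countingRatio A n ≤ countingRatio (A \ B) n + countingRatio B n := by
  unfold countingRatio
  rw [← add_div, ← Nat.cast_add]
  gcongr
  refine (Finset.card_le_card fun i hi => ?_).trans (Finset.card_union_le _ _)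
  simp only [Finset.mem_filter, Finset.mem_union, Set.mem_sdiff] at hi ⊢
  tauto

lemma isBoundedUnder_le_countingRatio (A : Set ℕ) :
    IsBoundedUnder (· ≤ ·) atTop (countingRatio A) :=
  isBoundedUnder_of ⟨1, countingRatio_le_one A⟩

lemma isBoundedUnder_ge_countingRatio (A : Set ℕ) :
    IsBoundedUnder (· ≥ ·) atTop (countingRatio A) :=
  isBoundedUnder_of ⟨0, countingRatio_nonneg A⟩

lemma upperDensity_mono {A B : Set ℕ} (hAB : A ⊆ B) : upperDensity A ≤ upperDensity B :=
  limsup_le_limsup (Eventually.of_forall (countingRatio_mono hAB))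
    (isBoundedUnder_ge_countingRatio A).isCoboundedUnder_le (isBoundedUnder_le_countingRatio B)

lemma upperDensity_le_diff_add (A B : Set ℕ) :
    upperDensity A ≤ upperDensity (A \ B) + upperDensity B :=
  calc upperDensity A ≤ limsup (countingRatio (A \ B) + countingRatio B) atTop :=
        limsup_le_limsup (Eventually.of_forall (countingRatio_le_diff_add A B))
          (isBoundedUnder_ge_countingRatio A).isCoboundedUnder_le
          (isBoundedUnder_le_add (isBoundedUnder_le_countingRatio _)
            (isBoundedUnder_le_countingRatio B))
    _ ≤ upperDensity (A \ B) + upperDensity B :=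
        limsup_add_le (isBoundedUnder_ge_countingRatio _) (isBoundedUnder_le_countingRatio _)
          (isBoundedUnder_ge_countingRatio B).isCoboundedUnder_le
          (isBoundedUnder_le_countingRatio B)

lemma countingRatio_le_cesaro {u : ℕ → ℝ} (hu : ∀ i, 0 ≤ u i) {ε : ℝ} (hε : 0 < ε) (n : ℕ) :
    countingRatio {i | ε ≤ u i} n ≤ ε⁻¹ * ((∑ i ∈ Finset.range n, u i) / n) := by
  set S := (Finset.range n).filter (fun i => i ∈ {i | ε ≤ u i})
  have markov : ε * S.card ≤ ∑ i ∈ Finset.range n, u i :=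
    calc ε * S.card = ∑ _i ∈ S, ε := by rw [Finset.sum_const, nsmul_eq_mul, mul_comm]
      _ ≤ ∑ i ∈ S, u i := Finset.sum_le_sum fun i hi => (Finset.mem_filter.mp hi).2
      _ ≤ ∑ i ∈ Finset.range n, u i :=
          Finset.sum_le_sum_of_subset_of_nonneg (Finset.filter_subset _ _) fun i _ _ => hu i
  calc countingRatio {i | ε ≤ u i} n ≤ ((∑ i ∈ Finset.range n, u i) / ε) / n := by
        unfold countingRatio
        gcongr
        rw [le_div_iff₀ hε]
        linarith
    _ = ε⁻¹ * ((∑ i ∈ Finset.range n, u i) / n) := by ring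

lemma upperDensity_eq_zero_of_tendsto_cesaro {u : ℕ → ℝ} (hu : ∀ i, 0 ≤ u i)
    (h : Tendsto (fun n : ℕ => (∑ i ∈ Finset.range n, u i) / n) atTop (𝓝 0))
    {ε : ℝ} (hε : 0 < ε) :
    upperDensity {i | ε ≤ u i} = 0 := by
  have : Tendsto (countingRatio {i | ε ≤ u i}) atTop (𝓝 0) := by
    refine squeeze_zero (countingRatio_nonneg _) (countingRatio_le_cesaro hu hε) ?_
    simpa using h.const_mul ε⁻¹
  exact this.limsup_eq

lemma omegaBarSeq_eq_of_tendsto_cesaro_dist {X : Type*} [MetricSpace X] {x y : ℕ → X}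
    (h : Tendsto (fun n : ℕ => (∑ i ∈ Finset.range n, dist (x i) (y i)) / n) atTop (𝓝 0)) :
    omegaBarSeq x = omegaBarSeq y := by
  refine (omegaBarSeq_subset_of_tendsto_cesaro_dist h).antisymm
    (omegaBarSeq_subset_of_tendsto_cesaro_dist ?_)
  simpa only [dist_comm] using h

theorem stmt2_general {X : Type*} [MetricSpace X] (f : X → X)
    (x y : X)
    (h : Filter.Tendsto
      (fun n : ℕ => (∑ i ∈ Finset.range n, dist (f^[i] x) (f^[i] y)) / n)
      Filter.atTop (nhds 0)) :
    omegaBar f x = omegaBar f y :=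
  omegaBarSeq_eq_of_tendsto_cesaro_dist h

theorem stmt2 {X : Type*} [MetricSpace X] [CompactSpace X] (f : X → X) (hf : Continuous f)
    (x y : X)
    (h : Filter.Tendsto
      (fun n : ℕ => (∑ i ∈ Finset.range n, dist (f^[i] x) (f^[i] y)) / n)
      Filter.atTop (nhds 0)) :
    omegaBar f x = omegaBar f y :=
  stmt2_general f x y h
end

section
/- Let $X$ be a compact metric space and $f:X\to X$ a continuous map. For any $x,y\in X$, if $\overline{\omega}(x,f)\setminus\overline{\omega}(y,f)\ne\emptyset$, then there exists $\delta>0$ such that $\liminf_{n\to\infty}\frac{1}{n}|\{0\le i\le n-1 : d(f^i(x),f^i(y))<\delta\}|<1$. -/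
/-!
If `z` lies in `ω̄(x)` but not in `ω̄(y)`, then some `ε`-ball around `z` is visited by the orbit
of `y` with upper density zero, while the `ε/2`-ball is visited by the orbit of `x` with positive
upper density. Whenever `x` visits the small ball, either `y` is in the large ball or the two
orbits are `ε/2`-apart, so the times at which they are `ε/2`-apart have positive upper density.
-/

open Filter Metric Set
open scoped Classical Topology

noncomputable def frequency (A : Set ℕ) (n : ℕ) : ℝ :=
  ((Finset.range n).filter (· ∈ A)).card / n

lemma upperDensity_eq_limsup_frequency (A : Set ℕ) :
    upperDensity A = limsup (frequency A) atTop :=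
  rfl

section Frequency

variable {A B C : Set ℕ}

lemma frequency_nonneg (n : ℕ) : 0 ≤ frequency A n := by
  unfold frequency
  positivity

lemma frequency_le_one (n : ℕ) : frequency A n ≤ 1 := by
  unfold frequency
  refine div_le_one_of_le₀ ?_ n.cast_nonneg
  exact_mod_cast (Finset.card_filter_le _ _).trans_eq (Finset.card_range n)

lemma isBoundedUnder_ge_frequency : IsBoundedUnder (· ≥ ·) atTop (frequency A) :=
  isBoundedUnder_of ⟨0, frequency_nonneg⟩

lemma isBoundedUnder_le_frequency : IsBoundedUnder (· ≤ ·) atTop (frequency A) :=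
  isBoundedUnder_of ⟨1, frequency_le_one⟩

lemma frequency_add_frequency_compl {n : ℕ} (hn : n ≠ 0) :
    frequency A n + frequency Aᶜ n = 1 := by
  unfold frequency
  rw [← add_div, div_eq_one_iff_eq (by exact_mod_cast hn)]
  have hsplit := Finset.card_filter_add_card_filter_not (s := Finset.range n) (· ∈ A)
  rw [Finset.card_range] at hsplit
  exact_mod_cast (by simpa only [Set.mem_compl_iff] using hsplit)

lemma frequency_mono (h : A ⊆ B) (n : ℕ) : frequency A n ≤ frequency B n := by
  unfold frequency
  gcongr

lemma frequency_union_le (n : ℕ) : frequency (A ∪ B) n ≤ frequency A n + frequency B n := by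
  unfold frequency
  rw [← add_div]
  gcongr
  norm_cast
  refine (Finset.card_le_card fun i => ?_).trans (Finset.card_union_le _ _)
  simp only [Finset.mem_filter, Finset.mem_union, Set.mem_union]
  tauto

lemma limsup_frequency_compl :
    limsup (frequency Aᶜ) atTop = 1 - liminf (frequency A) atTop := by
  have hcompl : frequency Aᶜ =ᶠ[atTop] fun n => 1 - frequency A n := by
    filter_upwards [eventually_ne_atTop 0] with n hn
    linarith [frequency_add_frequency_compl (A := A) hn]
  rw [limsup_congr hcompl, limsup_const_sub atTop _ 1
    isBoundedUnder_le_frequency.isCoboundedUnder_ge isBoundedUnder_ge_frequency]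

lemma limsup_frequency_le_add (h : A ⊆ B ∪ C) :
    limsup (frequency A) atTop ≤ limsup (frequency B) atTop + limsup (frequency C) atTop :=
  calc limsup (frequency A) atTop ≤ limsup (frequency B + frequency C) atTop :=
        limsup_le_limsup
          (Eventually.of_forall fun n => (frequency_mono h n).trans (frequency_union_le n))
          isBoundedUnder_ge_frequency.isCoboundedUnder_le
          (isBoundedUnder_le_add isBoundedUnder_le_frequency isBoundedUnder_le_frequency)
    _ ≤ _ := limsup_add_le isBoundedUnder_ge_frequency isBoundedUnder_le_frequency
          isBoundedUnder_ge_frequency.isCoboundedUnder_le isBoundedUnder_le_frequency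

end Frequency

theorem exists_liminf_frequency_dist_lt_lt_one {X : Type*} [MetricSpace X] (x y : ℕ → X)
    (h : (omegaBarSeq x \ omegaBarSeq y).Nonempty) :
    ∃ δ > 0, liminf (frequency {i | dist (x i) (y i) < δ}) atTop < 1 := by
  obtain ⟨z, hzx, hzy⟩ := h
  simp only [omegaBarSeq, upperDensity_eq_limsup_frequency, mem_ofPred_eq, not_forall,
    not_lt] at hzy
  obtain ⟨ε, hε, hyz⟩ := hzy
  refine ⟨ε / 2, half_pos hε, lt_of_not_ge fun hclose => ?_⟩
  have hxz : 0 < limsup (frequency {i | dist (x i) z < ε / 2}) atTop := hzx _ (half_pos hε)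
  have hcover : {i | dist (x i) z < ε / 2} ⊆
      {i | dist (y i) z < ε} ∪ {i | dist (x i) (y i) < ε / 2}ᶜ := by
    intro i (hi : dist (x i) z < ε / 2)
    by_cases hd : dist (x i) (y i) < ε / 2
    · left
      show dist (y i) z < ε
      linarith [dist_triangle_left (y i) z (x i)]
    · exact Or.inr hd
  have hsplit := limsup_frequency_le_add hcover
  rw [limsup_frequency_compl] at hsplit
  linarith

theorem stmt3_general {X : Type*} [MetricSpace X] (f : X → X)
    (x y : X) (h : (omegaBar f x \ omegaBar f y).Nonempty) :
    ∃ δ > 0, Filter.liminf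
      (fun n : ℕ =>
        (((Finset.range n).filter (fun i => dist (f^[i] x) (f^[i] y) < δ)).card : ℝ) / n)
      Filter.atTop < 1 :=
  exists_liminf_frequency_dist_lt_lt_one (fun i => f^[i] x) (fun i => f^[i] y) h

theorem stmt3 {X : Type*} [MetricSpace X] [CompactSpace X] (f : X → X) (hf : Continuous f)
    (x y : X) (h : (omegaBar f x \ omegaBar f y).Nonempty) :
    ∃ δ > 0, Filter.liminf
      (fun n : ℕ =>
        (((Finset.range n).filter (fun i => dist (f^[i] x) (f^[i] y) < δ)).card : ℝ) / n)
      Filter.atTop < 1 :=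
  stmt3_general f x y h
end

section
/- Let $X$ be a compact metric space and $f:X\to X$ a continuous map. For any $x,y\in X$, if $\liminf_{n\to\infty}\frac{1}{n}\sum_{i=0}^{n-1}d(f^i(x),f^i(y))=0$, then $\overline{\omega}(x,f)\cap\overline{\omega}(y,f)\ne\emptyset$. -/
open Filter Metric Set
open scoped Classical Topology

/-!
Pick times `n_k` along which the Cesàro averages of `d(fⁱx, fⁱy)` tend to `0`, and call a set of
times null if its relative frequency in `[0, n_k)` tends to `0`; non-null sets have positive upper
density. By compactness there is a point `ζ` such that, for every `ε`, the times at which the orbit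
of `x` lies in `B_ε(ζ)` are not null: otherwise finitely many balls with null visiting times would
cover `X`. By Markov's inequality the times at which the two orbits are `ε / 2` apart are null, so
the orbit of `y` visits `B_ε(ζ)` at a non-null set of times as well.
-/

noncomputable def densityUpTo (A : Set ℕ) (n : ℕ) : ℝ :=
  (((Finset.range n).filter (fun i => i ∈ A)).card : ℝ) / n

lemma upperDensity_eq_limsup_densityUpTo (A : Set ℕ) :
    upperDensity A = limsup (densityUpTo A) atTop := rfl

lemma densityUpTo_nonneg (A : Set ℕ) (n : ℕ) : 0 ≤ densityUpTo A n := by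
  unfold densityUpTo; positivity

lemma densityUpTo_le_one (A : Set ℕ) (n : ℕ) : densityUpTo A n ≤ 1 := by
  unfold densityUpTo
  apply div_le_one_of_le₀ _ n.cast_nonneg
  exact_mod_cast (Finset.card_filter_le _ _).trans (Finset.card_range n).le

lemma densityUpTo_mono {A B : Set ℕ} (h : A ⊆ B) (n : ℕ) : densityUpTo A n ≤ densityUpTo B n := by
  unfold densityUpTo
  gcongr

lemma densityUpTo_union_le (A B : Set ℕ) (n : ℕ) :
    densityUpTo (A ∪ B) n ≤ densityUpTo A n + densityUpTo B n := by
  unfold densityUpTo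
  rw [← add_div]
  gcongr
  simp only [mem_union, Finset.filter_or]
  exact_mod_cast Finset.card_union_le _ _

lemma densityUpTo_biUnion_le {ι : Type*} (t : Finset ι) (B : ι → Set ℕ) (n : ℕ) :
    densityUpTo (⋃ z ∈ t, B z) n ≤ ∑ z ∈ t, densityUpTo (B z) n := by
  unfold densityUpTo
  rw [← Finset.sum_div]
  gcongr
  have hsub : (Finset.range n).filter (fun i => i ∈ ⋃ z ∈ t, B z) ⊆
      t.biUnion fun z => (Finset.range n).filter (fun i => i ∈ B z) := by
    intro i hi
    simp only [Finset.mem_filter, mem_iUnion, exists_prop] at hi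
    obtain ⟨hin, z, hz, hiz⟩ := hi
    exact Finset.mem_biUnion.2 ⟨z, hz, Finset.mem_filter.2 ⟨hin, hiz⟩⟩
  exact_mod_cast (Finset.card_le_card hsub).trans Finset.card_biUnion_le

lemma densityUpTo_univ {n : ℕ} (hn : n ≠ 0) : densityUpTo univ n = 1 := by
  simp [densityUpTo, hn]

lemma densityUpTo_setOf_le_le (g : ℕ → ℝ) (hg : ∀ i, 0 ≤ g i) {ε : ℝ} (hε : 0 < ε) (n : ℕ) :
    densityUpTo {i | ε ≤ g i} n ≤ (∑ i ∈ Finset.range n, g i) / n / ε := by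
  rw [densityUpTo, div_right_comm]
  gcongr
  rw [le_div_iff₀ hε, mul_comm]
  calc ε * ((Finset.range n).filter (fun i => i ∈ {i | ε ≤ g i})).card
      ≤ ∑ i ∈ (Finset.range n).filter (fun i => i ∈ {i | ε ≤ g i}), g i := by
        rw [mul_comm, ← nsmul_eq_mul]
        exact Finset.card_nsmul_le_sum _ _ _ fun i hi => (Finset.mem_filter.1 hi).2
    _ ≤ ∑ i ∈ Finset.range n, g i :=
        Finset.sum_le_sum_of_subset_of_nonneg (Finset.filter_subset _ _) fun i _ _ => hg i

def IsNullAlong (L : Filter ℕ) (A : Set ℕ) : Prop :=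
  Tendsto (densityUpTo A) L (𝓝 0)

namespace IsNullAlong

variable {L : Filter ℕ}

lemma mono {A B : Set ℕ} (hB : IsNullAlong L B) (h : A ⊆ B) : IsNullAlong L A :=
  squeeze_zero (densityUpTo_nonneg A) (densityUpTo_mono h) hB

lemma union {A B : Set ℕ} (hA : IsNullAlong L A) (hB : IsNullAlong L B) :
    IsNullAlong L (A ∪ B) := by
  refine squeeze_zero (densityUpTo_nonneg _) (densityUpTo_union_le A B) ?_
  simpa using hA.add hB

lemma biUnion {ι : Type*} {t : Finset ι} {B : ι → Set ℕ} (h : ∀ z ∈ t, IsNullAlong L (B z)) :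
    IsNullAlong L (⋃ z ∈ t, B z) := by
  refine squeeze_zero (densityUpTo_nonneg _) (densityUpTo_biUnion_le t B) ?_
  simpa using tendsto_finsetSum t h

lemma of_average_tendsto_zero (g : ℕ → ℝ) (hg : ∀ i, 0 ≤ g i)
    (h : Tendsto (fun n => (∑ i ∈ Finset.range n, g i) / n) L (𝓝 0)) {ε : ℝ} (hε : 0 < ε) :
    IsNullAlong L {i | ε ≤ g i} := by
  refine squeeze_zero (densityUpTo_nonneg _) (densityUpTo_setOf_le_le g hg hε) ?_
  simpa using h.div_const ε

end IsNullAlong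

lemma not_isNullAlong_univ {L : Filter ℕ} [L.NeBot] (hL : L ≤ atTop) : ¬IsNullAlong L univ := by
  intro h
  have hone : Tendsto (densityUpTo univ) L (𝓝 1) :=
    tendsto_const_nhds.congr' <| Eventually.mono (hL (eventually_ne_atTop 0))
      fun n hn => (densityUpTo_univ hn).symm
  exact zero_ne_one (tendsto_nhds_unique h hone)

lemma upperDensity_pos_of_not_isNullAlong {L : Filter ℕ} (hL : L ≤ atTop) {A : Set ℕ}
    (h : ¬IsNullAlong L A) : 0 < upperDensity A := by
  by_contra! hle
  refine h (Tendsto.mono_left ?_ hL)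
  rw [upperDensity_eq_limsup_densityUpTo] at hle
  have hbdd_above : IsBoundedUnder (· ≤ ·) atTop (densityUpTo A) :=
    isBoundedUnder_of ⟨1, densityUpTo_le_one A⟩
  have hbdd_below : IsBoundedUnder (· ≥ ·) atTop (densityUpTo A) :=
    isBoundedUnder_of ⟨0, densityUpTo_nonneg A⟩
  exact tendsto_of_le_liminf_of_limsup_le
    (le_liminf_of_le hbdd_above.isCoboundedUnder_ge (Eventually.of_forall (densityUpTo_nonneg A)))
    hle hbdd_above hbdd_below

lemma exists_forall_not_isNullAlong_inter_ball {X : Type*} [MetricSpace X] [CompactSpace X]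
    {L : Filter ℕ} (a : ℕ → X) {S : Set ℕ} (hS : ¬IsNullAlong L S) :
    ∃ ζ : X, ∀ ε > 0, ¬IsNullAlong L (S ∩ {i | dist (a i) ζ < ε}) := by
  by_contra! hnull
  -- Otherwise finitely many balls with null visiting times cover `X`, so `S` itself is null.
  choose ε hε hεnull using hnull
  obtain ⟨t, -, hcover⟩ := isCompact_univ.elim_nhds_subcover (fun z => ball z (ε z))
    fun z _ => ball_mem_nhds z (hε z)
  refine hS ((IsNullAlong.biUnion (t := t) fun z _ => hεnull z).mono fun i hi => ?_)
  obtain ⟨z, hz, hiz⟩ := mem_iUnion₂.1 (hcover (mem_univ (a i)))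
  exact mem_iUnion₂.2 ⟨z, hz, hi, hiz⟩

section Sequences

variable {X : Type*} [MetricSpace X] [CompactSpace X]

theorem omegaBarSeq_inter_nonempty_of_tendsto {L : Filter ℕ} [L.NeBot] (hL : L ≤ atTop)
    (a b : ℕ → X)
    (h : Tendsto (fun n => (∑ i ∈ Finset.range n, dist (a i) (b i)) / n) L (𝓝 0)) :
    (omegaBarSeq a ∩ omegaBarSeq b).Nonempty := by
  obtain ⟨ζ, hζ⟩ := exists_forall_not_isNullAlong_inter_ball a (not_isNullAlong_univ hL)
  simp only [univ_inter] at hζ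
  refine ⟨ζ, fun ε hε => upperDensity_pos_of_not_isNullAlong hL (hζ ε hε),
    fun ε hε => upperDensity_pos_of_not_isNullAlong hL fun hb => ?_⟩
  -- Up to the times where `a` and `b` are `ε / 2` apart, which are null along `L`,
  -- visits of `a` to the `ε / 2`-ball about `ζ` are visits of `b` to the `ε`-ball.
  have hfar : IsNullAlong L {i | ε / 2 ≤ dist (a i) (b i)} :=
    .of_average_tendsto_zero _ (fun _ => dist_nonneg) h (half_pos hε)
  refine hζ (ε / 2) (half_pos hε) ((hb.union hfar).mono fun i hi => ?_)
  refine (lt_or_ge (dist (a i) (b i)) (ε / 2)).imp (fun hab => ?_) id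
  have hi : dist (a i) ζ < ε / 2 := hi
  show dist (b i) ζ < ε
  linarith [dist_triangle_left (b i) ζ (a i)]

lemma average_dist_le_diam (a b : ℕ → X) (n : ℕ) :
    (∑ i ∈ Finset.range n, dist (a i) (b i)) / n ≤ diam (univ : Set X) := by
  rcases Nat.eq_zero_or_pos n with rfl | hn
  · simpa using diam_nonneg
  rw [div_le_iff₀ (by exact_mod_cast hn)]
  calc ∑ i ∈ Finset.range n, dist (a i) (b i) ≤ ∑ _i ∈ Finset.range n, diam (univ : Set X) :=
        Finset.sum_le_sum fun i _ =>
          dist_le_diam_of_mem isBounded_of_compactSpace (mem_univ _) (mem_univ _)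
    _ = diam (univ : Set X) * n := by simp [mul_comm]

theorem omegaBarSeq_inter_nonempty_of_liminf_eq_zero (a b : ℕ → X)
    (h : liminf (fun n => (∑ i ∈ Finset.range n, dist (a i) (b i)) / n) atTop = 0) :
    (omegaBarSeq a ∩ omegaBarSeq b).Nonempty := by
  obtain ⟨φ, hφ0, hφ⟩ := exists_seq_tendsto_liminf
    (u := fun n => (∑ i ∈ Finset.range n, dist (a i) (b i)) / n) (f := atTop)
    (isBoundedUnder_of ⟨_, average_dist_le_diam a b⟩).isCoboundedUnder_ge
    (isBoundedUnder_of ⟨0, fun n => by positivity⟩)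
  rw [h] at hφ0
  exact omegaBarSeq_inter_nonempty_of_tendsto hφ a b (tendsto_map'_iff.2 hφ0)

end Sequences

theorem stmt4_general {X : Type*} [MetricSpace X] [CompactSpace X] (f : X → X)
    (x y : X)
    (h : Filter.liminf
      (fun n : ℕ => (∑ i ∈ Finset.range n, dist (f^[i] x) (f^[i] y)) / n)
      Filter.atTop = 0) :
    (omegaBar f x ∩ omegaBar f y).Nonempty :=
  omegaBarSeq_inter_nonempty_of_liminf_eq_zero _ _ h

theorem stmt4 {X : Type*} [MetricSpace X] [CompactSpace X] (f : X → X) (hf : Continuous f)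
    (x y : X)
    (h : Filter.liminf
      (fun n : ℕ => (∑ i ∈ Finset.range n, dist (f^[i] x) (f^[i] y)) / n)
      Filter.atTop = 0) :
    (omegaBar f x ∩ omegaBar f y).Nonempty :=
  stmt4_general f x y h
end

section
/- Let $X$ be a compact metric space, $f:X\to X$ continuous, $x\in X$, and $\mu$ a Borel probability measure on $X$. If $\frac{1}{n}\sum_{i=0}^{n-1}\delta_{f^i(x)}$ converges to $\mu$ in the weak* topology, then $\overline{\omega}(x,f)=\operatorname{supp}(\mu)$. -/
open Filter Metric Set
open scoped Classical Topology

/-! Both inclusions compare the frequency of visits of the orbit to a ball with the `μ`-mass of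
a slightly larger or smaller ball. A Urysohn function `g` squeezed between the indicators of
`closedBall y r` and `ball y R` (`r < R`) turns counting visits into Birkhoff averages of `g`,
which converge to `∫ g ∂μ` by hypothesis; the integral is in turn squeezed between the masses of
the two balls. -/

open MeasureTheory Finset

lemma card_filter_range_eq_sum_indicator (A : Set ℕ) (n : ℕ) :
    ((#{i ∈ range n | i ∈ A} : ℕ) : ℝ) = ∑ i ∈ range n, A.indicator 1 i := by
  simp [Set.indicator_apply]

lemma upperDensity_le_of_tendsto_average {A : Set ℕ} {a : ℕ → ℝ} {L : ℝ}
    (hA : A.indicator 1 ≤ a) (ha : Tendsto (fun n : ℕ => (∑ i ∈ range n, a i) / n) atTop (𝓝 L)) :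
    upperDensity A ≤ L := by
  rw [← ha.limsup_eq]
  refine limsup_le_limsup (Eventually.of_forall fun n => ?_) ?_ ha.isBoundedUnder_le
  · dsimp only
    rw [card_filter_range_eq_sum_indicator]
    gcongr with i
    exact hA i
  · exact isBoundedUnder_of ⟨0, fun n => by positivity⟩ |>.isCoboundedUnder_le

lemma le_upperDensity_of_tendsto_average {A : Set ℕ} {a : ℕ → ℝ} {L : ℝ}
    (hA : a ≤ A.indicator 1) (ha : Tendsto (fun n : ℕ => (∑ i ∈ range n, a i) / n) atTop (𝓝 L)) :
    L ≤ upperDensity A := by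
  rw [← ha.limsup_eq]
  refine limsup_le_limsup (Eventually.of_forall fun n => ?_) ha.isBoundedUnder_ge.isCoboundedUnder_le
    (isBoundedUnder_of ⟨1, fun n => ?_⟩)
  · dsimp only
    rw [card_filter_range_eq_sum_indicator]
    gcongr with i
    exact hA i
  · exact div_le_one_of_le₀ (by exact_mod_cast (card_filter_le _ _).trans_eq (card_range n))
      n.cast_nonneg

lemma exists_continuous_indicator_le_le {X : Type*} [TopologicalSpace X] [NormalSpace X]
    {s t : Set X} (hs : IsClosed s) (ht : IsOpen t) (hst : s ⊆ t) :
    ∃ g : C(X, ℝ), s.indicator 1 ≤ g ∧ ⇑g ≤ t.indicator 1 := by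
  obtain ⟨g, hg0, hg1, hg01⟩ := exists_continuous_zero_one_of_isClosed ht.isClosed_compl hs
    (disjoint_compl_left_iff_subset.mpr hst)
  refine ⟨g, Set.indicator_le' (fun z hz => (hg1 hz).ge) fun z _ => (hg01 z).1, fun z => ?_⟩
  by_cases hz : z ∈ t
  · simpa [hz] using (hg01 z).2
  · simpa [hz] using (hg0 hz).le

section EmpiricalMeasures

variable {X : Type*} [MetricSpace X] [MeasurableSpace X] [OpensMeasurableSpace X]
  {μ : Measure X} [IsFiniteMeasure μ] {u : ℕ → X}

lemma integrable_of_indicator_le_le {s t : Set X} {g : C(X, ℝ)}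
    (hs : s.indicator 1 ≤ g) (hgt : ⇑g ≤ t.indicator 1) : Integrable g μ := by
  refine Integrable.of_bound g.continuous.aestronglyMeasurable 1 (Eventually.of_forall fun z => ?_)
  have h0 : (0 : ℝ) ≤ g z := (Set.indicator_nonneg (fun _ _ => zero_le_one) z).trans (hs z)
  have h1 : g z ≤ 1 := (hgt z).trans (Set.indicator_le_self' (fun _ _ => zero_le_one) z)
  exact (Real.norm_of_nonneg h0).trans_le h1

variable (hu : ∀ g : C(X, ℝ),
  Tendsto (fun n : ℕ => (∑ i ∈ range n, g (u i)) / n) atTop (𝓝 (∫ z, g z ∂μ)))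
include hu

lemma upperDensity_le_measureReal {A : Set ℕ} {s t : Set X} (hs : IsClosed s) (ht : IsOpen t)
    (hst : s ⊆ t) (hA : ∀ i ∈ A, u i ∈ s) : upperDensity A ≤ μ.real t := by
  obtain ⟨g, hsg, hgt⟩ := exists_continuous_indicator_le_le hs ht hst
  have hAg : A.indicator 1 ≤ fun i => g (u i) := Set.indicator_le'
    (fun i hi => by simpa [hA i hi] using hsg (u i))
    fun i _ => (Set.indicator_nonneg (fun _ _ => zero_le_one) _).trans (hsg (u i))
  calc upperDensity A ≤ ∫ z, g z ∂μ := upperDensity_le_of_tendsto_average hAg (hu g)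
    _ ≤ ∫ z, t.indicator 1 z ∂μ :=
        integral_mono (integrable_of_indicator_le_le hsg hgt)
          ((integrable_const 1).indicator ht.measurableSet) hgt
    _ = μ.real t := integral_indicator_one ht.measurableSet

lemma measureReal_le_upperDensity {A : Set ℕ} {s t : Set X} (hs : IsClosed s) (ht : IsOpen t)
    (hst : s ⊆ t) (hA : ∀ i, u i ∈ t → i ∈ A) : μ.real s ≤ upperDensity A := by
  obtain ⟨g, hsg, hgt⟩ := exists_continuous_indicator_le_le hs ht hst
  have hgA : (fun i => g (u i)) ≤ A.indicator 1 := fun i => Set.le_indicator_apply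
    (fun _ => (hgt (u i)).trans (Set.indicator_le_self' (fun _ _ => zero_le_one) _))
    fun hi => by simpa [mt (hA i) hi] using hgt (u i)
  calc μ.real s = ∫ z, s.indicator 1 z ∂μ := (integral_indicator_one hs.measurableSet).symm
    _ ≤ ∫ z, g z ∂μ :=
        integral_mono ((integrable_const 1).indicator hs.measurableSet)
          (integrable_of_indicator_le_le hsg hgt) hsg
    _ ≤ upperDensity A := le_upperDensity_of_tendsto_average hgA (hu g)

end EmpiricalMeasures

theorem omegaBarSeq_eq_of_tendsto_average {X : Type*} [MetricSpace X] [MeasurableSpace X]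
    [OpensMeasurableSpace X] {μ : Measure X} [IsFiniteMeasure μ] {u : ℕ → X}
    (hu : ∀ g : C(X, ℝ),
      Tendsto (fun n : ℕ => (∑ i ∈ range n, g (u i)) / n) atTop (𝓝 (∫ z, g z ∂μ))) :
    omegaBarSeq u = {y : X | ∀ ε > 0, 0 < μ (ball y ε)} := by
  ext y
  simp only [omegaBarSeq, mem_ofPred_eq]
  constructor
  · intro hy ε hε
    have hμ : 0 < μ.real (ball y ε) := (hy (ε / 2) (half_pos hε)).trans_le <|
      upperDensity_le_measureReal hu isClosed_closedBall isOpen_ball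
        (closedBall_subset_ball (half_lt_self hε)) fun i hi => mem_closedBall.2 (le_of_lt hi)
    exact (ENNReal.toReal_pos_iff.1 hμ).1
  · intro hy ε hε
    have hμ : 0 < μ.real (closedBall y (ε / 2)) :=
      ENNReal.toReal_pos ((hy (ε / 2) (half_pos hε)).trans_le
        (measure_mono ball_subset_closedBall)).ne' (measure_ne_top μ _)
    exact hμ.trans_le <| measureReal_le_upperDensity hu isClosed_closedBall isOpen_ball
      (closedBall_subset_ball (half_lt_self hε)) fun i hi => hi

theorem stmt5_general {X : Type*} [MetricSpace X]
    [MeasurableSpace X] [BorelSpace X]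
    (f : X → X) (x : X)
    (μ : MeasureTheory.Measure X) [MeasureTheory.IsProbabilityMeasure μ]
    (h : ∀ g : C(X, ℝ),
      Filter.Tendsto (fun n : ℕ => (∑ i ∈ Finset.range n, g (f^[i] x)) / n)
        Filter.atTop (nhds (∫ z, g z ∂μ))) :
    omegaBar f x = {y : X | ∀ ε > 0, 0 < μ (Metric.ball y ε)} :=
  omegaBarSeq_eq_of_tendsto_average h

theorem stmt5 {X : Type*} [MetricSpace X] [CompactSpace X]
    [MeasurableSpace X] [BorelSpace X]
    (f : X → X) (hf : Continuous f) (x : X)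
    (μ : MeasureTheory.Measure X) [MeasureTheory.IsProbabilityMeasure μ]
    (h : ∀ g : C(X, ℝ),
      Filter.Tendsto (fun n : ℕ => (∑ i ∈ Finset.range n, g (f^[i] x)) / n)
        Filter.atTop (nhds (∫ z, g z ∂μ))) :
    omegaBar f x = {y : X | ∀ ε > 0, 0 < μ (Metric.ball y ε)} :=
  stmt5_general f x μ h
end

section
/- Let $X$ be a compact metric space and $f:X\to X$ a minimal continuous map. Then $\overline{\omega}(x,f)=X$ for every $x\in X$. -/
open Filter Metric Set
open scoped Classical Topology

/-- A syndetic set has positive upper density. -/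
lemma upperDensity_pos_of_syndetic (A : Set ℕ) (N : ℕ)
    (hA : ∀ m : ℕ, ∃ k, m ≤ k ∧ k ≤ m + N ∧ k ∈ A) : 0 < upperDensity A := by
  set g : ℕ → ℝ := fun n => (((Finset.range n).filter (fun i => i ∈ A)).card : ℝ) / n with hg
  have hcount : ∀ m : ℕ, m ≤ ((Finset.range ((N+1)*m)).filter (fun i => i ∈ A)).card := by
    intro m
    induction m with
    | zero => simp
    | succ m ih =>
      obtain ⟨k, hk1, hk2, hkA⟩ := hA ((N+1)*m)
      have hklt : k < (N+1)*(m+1) := by nlinarith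
      have hnot : k ∉ (Finset.range ((N+1)*m)).filter (fun i => i ∈ A) := by
        intro h
        exact absurd (Finset.mem_range.1 (Finset.mem_filter.1 h).1) (not_lt.2 hk1)
      have hsub : insert k ((Finset.range ((N+1)*m)).filter (fun i => i ∈ A)) ⊆
          (Finset.range ((N+1)*(m+1))).filter (fun i => i ∈ A) := by
        intro j hj
        rcases Finset.mem_insert.1 hj with rfl | hj
        · exact Finset.mem_filter.2 ⟨Finset.mem_range.2 hklt, hkA⟩
        · obtain ⟨hj1, hj2⟩ := Finset.mem_filter.1 hj
          exact Finset.mem_filter.2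
            ⟨Finset.mem_range.2 (lt_of_lt_of_le (Finset.mem_range.1 hj1) (by nlinarith)), hj2⟩
      calc m + 1 ≤ (insert k ((Finset.range ((N+1)*m)).filter (fun i => i ∈ A))).card := by
            rw [Finset.card_insert_of_notMem hnot]; omega
        _ ≤ _ := Finset.card_le_card hsub
  have hbdd : IsBoundedUnder (· ≤ ·) atTop g := by
    refine Filter.isBoundedUnder_of ⟨1, fun (n : ℕ) => ?_⟩
    simp only [hg]
    rcases Nat.eq_zero_or_pos n with rfl | hn
    · simp
    · rw [div_le_one (by exact_mod_cast hn)]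
      exact_mod_cast (Finset.card_filter_le _ _).trans_eq (Finset.card_range n)
  have hfreq : ∃ᶠ n in atTop, (1:ℝ)/(N+1) ≤ g n := by
    rw [Filter.frequently_atTop]
    intro a
    refine ⟨(N+1)*(a+1), by nlinarith, ?_⟩
    have hle := hcount (a+1)
    have hpos : (0:ℝ) < ((N:ℝ)+1)*((a:ℝ)+1) := by positivity
    simp only [hg]
    have hle' : ((a:ℝ)+1) ≤ (((Finset.range ((N+1)*(a+1))).filter (fun i => i ∈ A)).card : ℝ) := by
      exact_mod_cast hle
    rw [div_le_div_iff₀ (by positivity) (by push_cast; positivity)]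
    push_cast
    nlinarith [hle', Nat.cast_nonneg (α := ℝ) N]
  have := Filter.le_limsup_of_frequently_le hfreq hbdd
  have h0 : (0:ℝ) < 1/(N+1) := by positivity
  exact lt_of_lt_of_le h0 this

theorem stmt12 {X : Type*} [MetricSpace X] [CompactSpace X] (f : X → X) (hf : Continuous f)
    (hmin : ∀ x : X, Dense (Set.range fun n : ℕ => f^[n] x)) :
    ∀ x : X, omegaBar f x = Set.univ := by
  intro x
  ext y
  simp only [Set.mem_univ, iff_true, omegaBar, omegaBarSeq, Set.mem_setOf_eq]
  intro ε hε
  set U : Set X := Metric.ball y ε with hU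
  have hUo : IsOpen U := isOpen_ball
  have hcov : (Set.univ : Set X) ⊆ ⋃ k : ℕ, f^[k] ⁻¹' U := by
    intro z _
    obtain ⟨w, hwr, hwU⟩ := (hmin z).exists_mem_open hUo ⟨y, mem_ball_self hε⟩
    obtain ⟨k, rfl⟩ := hwr
    exact Set.mem_iUnion.2 ⟨k, hwU⟩
  obtain ⟨t, ht⟩ := isCompact_univ.elim_finite_subcover _
    (fun k : ℕ => hUo.preimage (hf.iterate k)) hcov
  set N := t.sup id with hN
  apply upperDensity_pos_of_syndetic _ N
  intro m
  obtain ⟨k, hkt, hk⟩ := Set.mem_iUnion₂.1 (ht (Set.mem_univ (f^[m] x)))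
  refine ⟨m + k, Nat.le_add_right _ _, by
    have : k ≤ N := Finset.le_sup (f := id) hkt
    omega, ?_⟩
  have hiter : f^[m + k] x = f^[k] (f^[m] x) := by
    rw [Nat.add_comm, Function.iterate_add_apply]
  simp only [Set.mem_setOf_eq, hiter]
  exact Metric.mem_ball.1 hk
end

section
/- Let $X,Y$ be compact metric spaces, $f:X\to X$, $g:Y\to Y$ continuous maps, and $\pi:X\to Y$ a continuous surjection with $\pi\circ f=g\circ\pi$. Then $\pi(\overline{\omega}(x,f))=\overline{\omega}(\pi(x),g)$ for every $x\in X$. -/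
open Filter Metric Set
open scoped Classical Topology

noncomputable def dFn (A : Set ℕ) (n : ℕ) : ℝ :=
  (((Finset.range n).filter (fun i => i ∈ A)).card : ℝ) / n

lemma ud_eq (A : Set ℕ) : upperDensity A = limsup (dFn A) atTop := rfl

lemma div_nat_mono {a b : ℝ} (h : a ≤ b) (n : ℕ) : a / (n:ℝ) ≤ b / n := by
  exact div_le_div_of_nonneg_right h (Nat.cast_nonneg n)

lemma dFn_nonneg (A : Set ℕ) (n : ℕ) : 0 ≤ dFn A n := by
  unfold dFn; positivity

lemma dFn_le_one (A : Set ℕ) (n : ℕ) : dFn A n ≤ 1 := by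
  unfold dFn
  rcases Nat.eq_zero_or_pos n with h | h
  · simp [h]
  · rw [div_le_one (by exact_mod_cast h)]
    exact_mod_cast (Finset.card_filter_le _ _).trans (le_of_eq (Finset.card_range n))

lemma dFn_mono {A B : Set ℕ} (h : A ⊆ B) (n : ℕ) : dFn A n ≤ dFn B n := by
  unfold dFn
  have hc : ((Finset.range n).filter (fun i => i ∈ A)).card ≤
      ((Finset.range n).filter (fun i => i ∈ B)).card :=
    Finset.card_le_card (by
      intro i hi
      simp only [Finset.mem_filter] at hi ⊢
      exact ⟨hi.1, h hi.2⟩)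
  exact div_nat_mono (by exact_mod_cast hc) n

lemma dFn_bddAbove (A : Set ℕ) : IsBoundedUnder (· ≤ ·) atTop (dFn A) :=
  isBoundedUnder_of ⟨1, fun n => dFn_le_one A n⟩

lemma dFn_bddBelow (A : Set ℕ) : IsBoundedUnder (· ≥ ·) atTop (dFn A) :=
  isBoundedUnder_of ⟨0, fun n => dFn_nonneg A n⟩

lemma ud_mono {A B : Set ℕ} (h : A ⊆ B) : upperDensity A ≤ upperDensity B := by
  rw [ud_eq, ud_eq]
  exact limsup_le_limsup (Eventually.of_forall (dFn_mono h))
    (dFn_bddBelow A).isCoboundedUnder_le (dFn_bddAbove B)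

lemma tendsto_of_ud_nonpos {A : Set ℕ} (h : upperDensity A ≤ 0) :
    Tendsto (dFn A) atTop (𝓝 0) := by
  have h1 : limsup (dFn A) atTop ≤ 0 := by rw [← ud_eq]; exact h
  have h2 : (0:ℝ) ≤ liminf (dFn A) atTop :=
    le_liminf_of_le (dFn_bddAbove A).isCoboundedUnder_ge
      (Eventually.of_forall (dFn_nonneg A))
  have h3 : liminf (dFn A) atTop ≤ limsup (dFn A) atTop :=
    liminf_le_limsup (dFn_bddAbove A) (dFn_bddBelow A)
  exact tendsto_of_liminf_eq_limsup (le_antisymm (h3.trans h1) h2)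
    (le_antisymm h1 (h2.trans h3)) (dFn_bddAbove A) (dFn_bddBelow A)

lemma ud_biUnion_nonpos {ι : Type*} (t : Finset ι) (S : ι → Set ℕ)
    (h : ∀ j ∈ t, upperDensity (S j) ≤ 0) :
    upperDensity (⋃ j ∈ t, S j) ≤ 0 := by
  have hbound : ∀ n, dFn (⋃ j ∈ t, S j) n ≤ ∑ j ∈ t, dFn (S j) n := by
    intro n
    unfold dFn
    rw [← Finset.sum_div]
    refine div_nat_mono ?_ n
    have hsub : (Finset.range n).filter (fun i => i ∈ ⋃ j ∈ t, S j) ⊆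
        t.biUnion (fun j => (Finset.range n).filter (fun i => i ∈ S j)) := by
      intro i hi
      simp only [Finset.mem_filter, Set.mem_iUnion, Finset.mem_biUnion] at hi ⊢
      obtain ⟨hir, j, hjt, hij⟩ := hi
      exact ⟨j, hjt, hir, hij⟩
    calc ((Finset.filter (fun i => i ∈ ⋃ j ∈ t, S j) (Finset.range n)).card : ℝ)
        ≤ ((t.biUnion (fun j => (Finset.range n).filter (fun i => i ∈ S j))).card : ℝ) := by
          exact_mod_cast Finset.card_le_card hsub
      _ ≤ ∑ j ∈ t, ((Finset.filter (fun i => i ∈ S j) (Finset.range n)).card : ℝ) := by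
          exact_mod_cast Finset.card_biUnion_le
  have hsum : Tendsto (fun n => ∑ j ∈ t, dFn (S j) n) atTop (𝓝 0) := by
    have := tendsto_finset_sum t (fun j hj => tendsto_of_ud_nonpos (h j hj))
    simpa using this
  have htend : Tendsto (dFn (⋃ j ∈ t, S j)) atTop (𝓝 0) :=
    squeeze_zero (dFn_nonneg _) hbound hsum
  rw [ud_eq, htend.limsup_eq]

theorem stmt13 {X Y : Type*} [MetricSpace X] [CompactSpace X] [MetricSpace Y] [CompactSpace Y]
    (f : X → X) (g : Y → Y) (π : X → Y)
    (hf : Continuous f) (hg : Continuous g) (hπ : Continuous π)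
    (hsurj : Function.Surjective π) (hcomm : π ∘ f = g ∘ π) (x : X) :
    π '' omegaBar f x = omegaBar g (π x) := by
  have hsemi : Function.Semiconj π f g := fun a => congrFun hcomm a
  have hiter : ∀ i : ℕ, π (f^[i] x) = g^[i] (π x) := fun i => (hsemi.iterate_right i) x
  apply Set.Subset.antisymm
  · -- forward
    rintro _ ⟨z, hz, rfl⟩
    intro ε hε
    obtain ⟨δ, hδ, hδε⟩ := Metric.uniformContinuous_iff.mp
      (CompactSpace.uniformContinuous_of_continuous hπ) ε hε
    refine lt_of_lt_of_le (hz δ hδ) (ud_mono ?_)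
    intro i hi
    simp only [Set.mem_setOf_eq] at hi ⊢
    rw [← hiter i]
    exact hδε hi
  · -- reverse
    intro w hw
    by_contra hno
    have hfiber : ∀ z : X, ∃ δ > 0, π z = w →
        upperDensity {i | dist (f^[i] x) z < δ} ≤ 0 := by
      intro z
      by_cases hzw : π z = w
      · have hz : z ∉ omegaBar f x := fun hmem => hno ⟨z, hmem, hzw⟩
        simp only [omegaBar, omegaBarSeq, Set.mem_setOf_eq, not_forall] at hz
        obtain ⟨δ, hδ, hud⟩ := hz
        exact ⟨δ, hδ, fun _ => not_lt.mp hud⟩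
      · exact ⟨1, one_pos, fun h => absurd h hzw⟩
    choose δ hδpos hδprop using hfiber
    set K : Set X := π ⁻¹' {w} with hK
    have hKc : IsCompact K := (isClosed_singleton.preimage hπ).isCompact
    obtain ⟨t, htK, hcover⟩ := hKc.elim_nhds_subcover (fun z => ball z (δ z))
      (fun z _ => ball_mem_nhds z (hδpos z))
    set U : Set X := ⋃ z ∈ t, ball z (δ z) with hU
    have hUopen : IsOpen U := isOpen_biUnion (fun z _ => isOpen_ball)
    -- find ε with π ⁻¹' (ball w ε) ⊆ U
    have hCcl : IsClosed (π '' Uᶜ) :=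
      ((hUopen.isClosed_compl).isCompact.image hπ).isClosed
    have hwC : w ∉ π '' Uᶜ := by
      rintro ⟨a, haU, rfl⟩
      exact haU (hcover (by simp [hK]))
    obtain ⟨ε, hε, hball⟩ := Metric.isOpen_iff.mp hCcl.isOpen_compl w hwC
    have hA := hw ε hε
    have hsub : {i | dist (g^[i] (π x)) w < ε} ⊆
        ⋃ z ∈ t, {i | dist (f^[i] x) z < δ z} := by
      intro i hi
      simp only [Set.mem_setOf_eq] at hi
      have h1 : f^[i] x ∈ U := by
        by_contra hiU
        exact hball (Metric.mem_ball.mpr hi) ⟨f^[i] x, hiU, hiter i⟩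
      simp only [hU, Set.mem_iUnion, Metric.mem_ball] at h1
      obtain ⟨z, hzt, hz⟩ := h1
      exact Set.mem_biUnion hzt hz
    have := (ud_mono hsub).trans (ud_biUnion_nonpos t _ (fun z hz =>
      hδprop z (by have := htK z hz; simpa [hK] using this)))
    exact absurd hA (not_lt.mpr this)
end

section
/- Let $X$ be a compact metric space and $f:X\to X$ a continuous surjective map. If for every sequence $(x_i)_{i\ge0}$ in $X$ with $\lim_{n\to\infty}\frac{1}{n}\sum_{i=0}^{n-1}d(f(x_i),x_{i+1})=0$ there exists $x\in X$ with $\lim_{n\to\infty}\frac{1}{n}\sum_{i=0}^{n-1}d(f^i(x),x_i)=0$ (the asymptotic average shadowing property), then $f$ is chain mixing. -/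
/-!
Feed the asymptotic average shadowing property a pseudo-orbit made of stages of geometrically
growing length. Stage `n` starts at `T = stageStart n` and consists of three legs, each running
`T + 1` steps along a true orbit (of `x`, then of `y` twice) and then along a backward orbit of `y`
(built from a right inverse of `f`) until it reaches `y`; the last leg is one step longer. Errors
occur only at the at most six junctions per stage, so the average error tends to zero.

A point `p` shadowing it on average is `ε`-close to it off a set of density zero. Since the next
stage starts at `7 (T + 1)`, for some stage the bad indices before its end are fewer than `T`, so
the forward and the backward part of every leg contain a good index. Following the leg up to the
first good index, then the orbit of `p` up to the second, then the leg again gives `δ`-chains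
`x → y` of length `2T + 1` and loops at `y` of lengths `2T + 1` and `2T + 2`, and loops of
consecutive lengths produce chains of every large length.
-/

open Filter Metric Set
open scoped Classical Topology

open Finset

section Chains

variable {X : Type*} [MetricSpace X]

def HasChain (f : X → X) (δ : ℝ) (k : ℕ) (x y : X) : Prop :=
  ∃ c : ℕ → X, c 0 = x ∧ c k = y ∧ ∀ i < k, dist (f (c i)) (c (i + 1)) ≤ δ

variable {f : X → X} {δ : ℝ}

theorem hasChain_of_segment (w : ℕ → X) {i₀ i₁ : ℕ} (h : i₀ ≤ i₁)
    (hw : ∀ i, i₀ ≤ i → i < i₁ → dist (f (w i)) (w (i + 1)) ≤ δ) :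
    HasChain f δ (i₁ - i₀) (w i₀) (w i₁) :=
  ⟨fun j => w (i₀ + j), rfl, by simp only [Nat.add_sub_cancel' h],
    fun j hj => hw (i₀ + j) (Nat.le_add_right _ _) (by omega)⟩

theorem HasChain.trans {k l : ℕ} {x y z : X} (h₁ : HasChain f δ k x y)
    (h₂ : HasChain f δ l y z) : HasChain f δ (k + l) x z := by
  obtain ⟨c₁, hc₁0, hc₁k, hc₁⟩ := h₁
  obtain ⟨c₂, rfl, rfl, hc₂⟩ := h₂
  refine ⟨fun i => if i ≤ k then c₁ i else c₂ (i - k), by simp [hc₁0], ?_, fun i hi => ?_⟩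
  · rcases Nat.eq_zero_or_pos l with rfl | hl
    · simp [hc₁k]
    · simp [hl.ne']
  · by_cases hik : i < k
    · simpa [hik.le, Nat.succ_le_of_lt hik] using hc₁ i hik
    · have hc₂i := hc₂ (i - k) (by omega)
      rw [← Nat.sub_add_comm (not_lt.1 hik)] at hc₂i
      rcases (not_lt.1 hik).eq_or_lt with rfl | hki
      · simpa [hc₁k] using hc₂i
      · simpa [hki.not_ge, (hki.trans (Nat.lt_succ_self i)).not_ge] using hc₂i

theorem HasChain.refl (x : X) : HasChain f δ 0 x x := ⟨fun _ => x, rfl, rfl, by simp⟩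

theorem HasChain.mul_loop {L : ℕ} {y : X} (h : HasChain f δ L y y) (j : ℕ) :
    HasChain f δ (j * L) y y := by
  induction j with
  | zero => simpa using HasChain.refl y
  | succ j ih => simpa [add_mul] using ih.trans h

theorem exists_eq_mul_add_mul_succ {L j : ℕ} (h : L * L ≤ j) :
    ∃ a b, j = a * L + b * (L + 1) := by
  rcases Nat.eq_zero_or_pos L with rfl | hL
  · exact ⟨0, j, by simp⟩
  · have hmod : j % L ≤ j / L :=
      (Nat.mod_lt j hL).le.trans ((Nat.le_div_iff_mul_le hL).2 h)
    refine ⟨j / L - j % L, j % L, ?_⟩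
    zify [hmod]
    have := Nat.div_add_mod j L
    zify at this
    linear_combination -this

theorem HasChain.of_loops {m L : ℕ} {x y : X} (hxy : HasChain f δ m x y)
    (h₁ : HasChain f δ L y y) (h₂ : HasChain f δ (L + 1) y y) {k : ℕ} (hk : m + L * L ≤ k) :
    HasChain f δ k x y := by
  obtain ⟨a, b, hab⟩ := exists_eq_mul_add_mul_succ (Nat.le_sub_of_add_le' hk)
  have := hxy.trans ((h₁.mul_loop a).trans (h₂.mul_loop b))
  rwa [← hab, Nat.add_sub_cancel' (by omega)] at this

theorem hasChain_splice (hδ : 0 ≤ δ) {ε : ℝ}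
    (hfε : ∀ ⦃a b : X⦄, dist a b < ε → dist (f a) (f b) < δ)
    {z : ℕ → X} {p : X} {i₀ a b i₁ : ℕ} (h₀ : i₀ ≤ a) (hab : a < b) (h₁ : b < i₁)
    (hexact : ∀ i, i₀ ≤ i → i < i₁ → (i < a ∨ b ≤ i) → f (z i) = z (i + 1))
    (ha : dist (f^[a] p) (z a) < ε) (hb : dist (f^[b] p) (z b) < ε) :
    HasChain f δ (i₁ - i₀) (z i₀) (z i₁) := by
  set w : ℕ → X := fun i => if a < i ∧ i ≤ b then f^[i] p else z i
  have hw : ∀ i, ¬ (a < i ∧ i ≤ b) → w i = z i := fun i hi => if_neg hi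
  rw [← hw i₀ (by omega), ← hw i₁ (by omega)]
  refine hasChain_of_segment w (by omega) fun i hi₀ hi₁ => ?_
  simp only [w]
  split_ifs with hi hi'
  · rw [← Function.iterate_succ_apply' f i p, dist_self]; exact hδ
  · rw [show i = b by omega, ← hexact b (by omega) h₁ (.inr le_rfl),
      ← Function.iterate_succ_apply' f b p, Function.iterate_succ_apply']
    exact (hfε hb).le
  · rw [show i = a by omega, Function.iterate_succ_apply', dist_comm]
    exact (hfε ha).le
  · rw [hexact i hi₀ hi₁ (by omega), dist_self]; exact hδ

end Chains

theorem eventually_card_filter_le_lt {u : ℕ → ℝ} (hu : ∀ i, 0 ≤ u i) {ε c : ℝ} (hε : 0 < ε)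
    (hc : 0 < c) (h : Tendsto (fun n : ℕ => (∑ i ∈ range n, u i) / n) atTop (𝓝 0)) :
    ∀ᶠ N in atTop, (#{i ∈ range N | ε ≤ u i} : ℝ) < c * N := by
  filter_upwards [h.eventually (gt_mem_nhds (mul_pos hε hc)), eventually_gt_atTop 0]
    with N hN hN₀
  have hN₀' : (0 : ℝ) < N := Nat.cast_pos.2 hN₀
  have markov : ε * #{i ∈ range N | ε ≤ u i} ≤ ∑ i ∈ range N, u i := by
    calc ε * #{i ∈ range N | ε ≤ u i} = #{i ∈ range N | ε ≤ u i} • ε := by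
          rw [nsmul_eq_mul, mul_comm]
      _ ≤ ∑ i ∈ range N with ε ≤ u i, u i :=
          card_nsmul_le_sum _ _ _ fun i hi => (mem_filter.1 hi).2
      _ ≤ ∑ i ∈ range N, u i := sum_le_sum_of_subset_of_nonneg (filter_subset _ _)
          fun i _ _ => hu i
  rw [div_lt_iff₀ hN₀'] at hN
  nlinarith

theorem exists_not_of_card_filter_lt {P : ℕ → Prop} [DecidablePred P] {N W lo : ℕ}
    (h : #{i ∈ range N | P i} < W) (hlo : lo + W ≤ N) : ∃ i, lo ≤ i ∧ i < lo + W ∧ ¬ P i := by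
  by_contra! hall
  have : Finset.Ico lo (lo + W) ⊆ {i ∈ range N | P i} := fun i hi => by
    simp only [Finset.mem_Ico] at hi
    simpa using ⟨by omega, hall i hi.1 hi.2⟩
  have := Finset.card_le_card this
  simp only [Nat.card_Ico, Nat.add_sub_cancel_left] at this
  omega

theorem tendsto_natSqrt_add_two_div :
    Tendsto (fun N : ℕ => ((Nat.sqrt N : ℝ) + 2) / N) atTop (𝓝 0) := by
  have hsqrt : Tendsto Nat.sqrt atTop atTop :=
    tendsto_atTop_atTop.2 fun b => ⟨b * b, fun n hn => Nat.le_sqrt.2 hn⟩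
  refine squeeze_zero' (Eventually.of_forall fun N => by positivity)
    ?_ ((tendsto_const_div_atTop_nhds_zero_nat (3 : ℝ)).comp hsqrt)
  filter_upwards [hsqrt.eventually_ge_atTop 1] with N hN
  have hs : (1 : ℝ) ≤ Nat.sqrt N := by exact_mod_cast hN
  have hsN : (Nat.sqrt N : ℝ) ^ 2 ≤ N := by exact_mod_cast Nat.sqrt_le' N
  rw [Function.comp_apply, div_le_div_iff₀ (by nlinarith) (by positivity)]
  nlinarith

def stageStart : ℕ → ℕ
  | 0 => 0
  | n + 1 => 7 * stageStart n + 7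

theorem stageStart_succ (n : ℕ) : stageStart (n + 1) = 7 * stageStart n + 7 := rfl

theorem stageStart_strictMono : StrictMono stageStart :=
  strictMono_nat_of_lt_succ fun n => by rw [stageStart_succ]; omega

theorem sq_le_stageStart (n : ℕ) : n ^ 2 ≤ stageStart n := by
  induction n with
  | zero => simp
  | succ n ih => rw [stageStart_succ]; nlinarith

def stageOf (i : ℕ) : ℕ := Nat.findGreatest (fun n => stageStart n ≤ i) i

theorem stageOf_eq {n i : ℕ} (h₁ : stageStart n ≤ i) (h₂ : i < stageStart (n + 1)) :
    stageOf i = n :=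
  Nat.findGreatest_eq_iff.2 ⟨stageStart_strictMono.le_apply.trans h₁, fun _ => h₁,
    fun _ hn _ => (h₂.trans_le (stageStart_strictMono.monotone hn)).not_ge⟩

theorem stageStart_stageOf_le (i : ℕ) : stageStart (stageOf i) ≤ i :=
  Nat.findGreatest_spec (P := fun n => stageStart n ≤ i) (Nat.zero_le i) (Nat.zero_le i)

theorem lt_stageStart_stageOf_succ (i : ℕ) : i < stageStart (stageOf i + 1) := by
  by_contra! h
  have := Nat.le_findGreatest (P := fun n => stageStart n ≤ i)
    (stageStart_strictMono.le_apply.trans h) h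
  exact (Nat.lt_succ_self _).not_ge this

theorem stageOf_le_sqrt (i : ℕ) : stageOf i ≤ Nat.sqrt i :=
  Nat.le_sqrt'.2 ((sq_le_stageStart _).trans (stageStart_stageOf_le i))

section PseudoOrbit

variable {X : Type*} (f g : X → X) (x y : X)

def leg (u v : X) (M k r : ℕ) : X :=
  if r < M then f^[r] u else g^[k - r] v

def stage (t r : ℕ) : X :=
  if r < 2 * t + 2 then leg f g x y (t + 1) (2 * t + 1) r
  else if r < 4 * t + 4 then leg f g y y (t + 1) (2 * t + 1) (r - (2 * t + 2))
  else leg f g y y (t + 1) (2 * t + 2) (r - (4 * t + 4))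

def pseudoOrbit (i : ℕ) : X :=
  stage f g x y (stageStart (stageOf i)) (i - stageStart (stageOf i))

variable {f g x y}

theorem leg_succ (hg : Function.RightInverse g f) {u v : X} {M k r : ℕ} (hr : r < k)
    (hM : r + 1 ≠ M) : f (leg f g u v M k r) = leg f g u v M k (r + 1) := by
  unfold leg
  split_ifs with h₁ h₂ h₂
  · exact (Function.iterate_succ_apply' f r u).symm
  · omega
  · omega
  · rw [show k - r = k - (r + 1) + 1 by omega, Function.iterate_succ_apply', hg]

theorem stage_succ (hg : Function.RightInverse g f) {t r : ℕ} (hr : r + 1 < 6 * t + 7)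
    (hbreak : ∀ k < 6, r + 1 ≠ k * (t + 1)) :
    f (stage f g x y t r) = stage f g x y t (r + 1) := by
  have h₁ := hbreak 1 (by norm_num)
  have h₂ := hbreak 2 (by norm_num)
  have h₃ := hbreak 3 (by norm_num)
  have h₄ := hbreak 4 (by norm_num)
  have h₅ := hbreak 5 (by norm_num)
  unfold stage
  split_ifs <;> first
    | omega
    | exact leg_succ hg (by omega) (by omega)
    | rw [show r + 1 - (2 * t + 2) = r - (2 * t + 2) + 1 by omega]
      exact leg_succ hg (by omega) (by omega)
    | rw [show r + 1 - (4 * t + 4) = r - (4 * t + 4) + 1 by omega]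
      exact leg_succ hg (by omega) (by omega)

theorem pseudoOrbit_stageStart_add {n r : ℕ} (hr : r < 6 * stageStart n + 7) :
    pseudoOrbit f g x y (stageStart n + r) = stage f g x y (stageStart n) r := by
  rw [pseudoOrbit, stageOf_eq (Nat.le_add_right _ r) (by rw [stageStart_succ]; omega),
    Nat.add_sub_cancel_left]

theorem exists_break_of_ne (hg : Function.RightInverse g f) {i : ℕ}
    (h : f (pseudoOrbit f g x y i) ≠ pseudoOrbit f g x y (i + 1)) :
    ∃ n ≤ stageOf i + 1, ∃ k < 6, i + 1 = stageStart n + k * (stageStart n + 1) := by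
  set n := stageOf i
  set r := i - stageStart n
  have hi : i = stageStart n + r := (Nat.add_sub_cancel' (stageStart_stageOf_le i)).symm
  have hr : r < 6 * stageStart n + 7 := by
    have : i < stageStart (n + 1) := lt_stageStart_stageOf_succ i
    rw [stageStart_succ] at this
    omega
  by_cases hlast : r + 1 = 6 * stageStart n + 7
  · exact ⟨n + 1, le_rfl, 0, by norm_num, by rw [stageStart_succ]; omega⟩
  by_contra! hno
  refine h ?_
  rw [hi, pseudoOrbit_stageStart_add hr, add_assoc, pseudoOrbit_stageStart_add (by omega)]
  exact stage_succ hg (by omega) fun k hk hrk => hno n (Nat.le_succ n) k hk (by omega)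

theorem card_breaks_le (hg : Function.RightInverse g f) (N : ℕ) :
    #{i ∈ range N | f (pseudoOrbit f g x y i) ≠ pseudoOrbit f g x y (i + 1)} ≤
      6 * (Nat.sqrt N + 2) := by
  have hsub : {i ∈ range N | f (pseudoOrbit f g x y i) ≠ pseudoOrbit f g x y (i + 1)} ⊆
      (range (Nat.sqrt N + 2) ×ˢ range 6).image
        fun q => stageStart q.1 + q.2 * (stageStart q.1 + 1) - 1 := by
    intro i hi
    obtain ⟨hiN, hne⟩ := mem_filter.1 hi
    obtain ⟨n, hn, k, hk, hik⟩ := exists_break_of_ne hg hne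
    have := (stageOf_le_sqrt i).trans (Nat.sqrt_le_sqrt (mem_range.1 hiN).le)
    exact mem_image.2
      ⟨(n, k), mem_product.2 ⟨mem_range.2 (by omega), mem_range.2 hk⟩, by dsimp only; omega⟩
  calc _ ≤ _ := Finset.card_le_card hsub
    _ ≤ #(range (Nat.sqrt N + 2) ×ˢ range 6) := card_image_le
    _ = 6 * (Nat.sqrt N + 2) := by simp [mul_comm]

theorem tendsto_avg_dist_pseudoOrbit [MetricSpace X] [BoundedSpace X]
    (hg : Function.RightInverse g f) :
    Tendsto (fun N : ℕ =>
      (∑ i ∈ range N, dist (f (pseudoOrbit f g x y i)) (pseudoOrbit f g x y (i + 1))) / N)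
      atTop (𝓝 0) := by
  set D := diam (univ : Set X)
  have hD : ∀ a b : X, dist a b ≤ D := fun a b =>
    dist_le_diam_of_mem (Bornology.isBounded_univ.2 ‹_›) (mem_univ a) (mem_univ b)
  refine squeeze_zero (fun N => div_nonneg (sum_nonneg fun _ _ => dist_nonneg) N.cast_nonneg)
    (fun N => ?_) (by simpa using tendsto_natSqrt_add_two_div.const_mul (6 * D))
  rw [← mul_div_assoc]
  gcongr ?_ / _
  calc _ = ∑ i ∈ range N with f (pseudoOrbit f g x y i) ≠ pseudoOrbit f g x y (i + 1),
        dist (f (pseudoOrbit f g x y i)) (pseudoOrbit f g x y (i + 1)) := by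
        rw [← sum_filter_ne_zero]; simp only [dist_ne_zero]
    _ ≤ #{i ∈ range N | f (pseudoOrbit f g x y i) ≠ pseudoOrbit f g x y (i + 1)} • D :=
        sum_le_card_nsmul _ _ _ fun _ _ => hD _ _
    _ ≤ (6 * (Nat.sqrt N + 2) : ℕ) • D :=
        nsmul_le_nsmul_left (dist_nonneg.trans (hD x x)) (card_breaks_le hg N)
    _ = 6 * D * (Nat.sqrt N + 2) := by push_cast [nsmul_eq_mul]; ring

end PseudoOrbit

section Shadowing

variable {X : Type*} [MetricSpace X] {f g : X → X} {δ ε : ℝ}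

theorem hasChain_leg (hg : Function.RightInverse g f) (hδ : 0 ≤ δ)
    (hfε : ∀ ⦃a b : X⦄, dist a b < ε → dist (f a) (f b) < δ) {z : ℕ → X} {p u v : X}
    {s M k W N : ℕ} (hWM : W ≤ M) (hk : M + W ≤ k) (hN : s + M + W ≤ N)
    (hz : ∀ r ≤ k, z (s + r) = leg f g u v M k r)
    (hbad : #{i ∈ range N | ε ≤ dist (f^[i] p) (z i)} < W) : HasChain f δ k u v := by
  obtain ⟨a, ha₀, ha₁, ha⟩ := exists_not_of_card_filter_lt (lo := s) hbad (by omega)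
  obtain ⟨b, hb₀, hb₁, hb⟩ := exists_not_of_card_filter_lt (lo := s + M) hbad hN
  have hexact : ∀ i, s ≤ i → i < s + k → (i < a ∨ b ≤ i) → f (z i) = z (i + 1) := by
    intro i hi₀ hi₁ hi
    obtain ⟨r, rfl⟩ := Nat.exists_eq_add_of_le hi₀
    rw [hz r (by omega), add_assoc, hz (r + 1) (by omega)]
    exact leg_succ hg (by omega) (by omega)
  have hzs : z s = u := by simpa [leg, show 0 < M by omega] using hz 0 (Nat.zero_le k)
  have hzk : z (s + k) = v := by simpa [leg, show ¬k < M by omega] using hz k le_rfl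
  have := hasChain_splice hδ hfε (by omega) (by omega) (by omega) hexact (not_le.1 ha)
    (not_le.1 hb)
  rwa [Nat.add_sub_cancel_left, hzs, hzk] at this

theorem hasChains_of_card_filter_lt (hg : Function.RightInverse g f) (hδ : 0 ≤ δ)
    (hfε : ∀ ⦃a b : X⦄, dist a b < ε → dist (f a) (f b) < δ) {p x y : X} {n : ℕ}
    (hbad : #{i ∈ range (stageStart (n + 1)) |
      ε ≤ dist (f^[i] p) (pseudoOrbit f g x y i)} < stageStart n) :
    HasChain f δ (2 * stageStart n + 1) x y ∧ HasChain f δ (2 * stageStart n + 1) y y ∧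
      HasChain f δ (2 * stageStart n + 2) y y := by
  set t := stageStart n
  have hN : stageStart (n + 1) = 7 * t + 7 := stageStart_succ n
  have hz : ∀ r < 6 * t + 7, pseudoOrbit f g x y (t + r) = stage f g x y t r :=
    fun r hr => pseudoOrbit_stageStart_add hr
  refine ⟨hasChain_leg hg hδ hfε (s := t) (M := t + 1) le_self_add (by omega) (by omega)
      (fun r hr => ?_) hbad,
    hasChain_leg hg hδ hfε (s := t + (2 * t + 2)) (M := t + 1) le_self_add (by omega) (by omega)
      (fun r hr => ?_) hbad,
    hasChain_leg hg hδ hfε (s := t + (4 * t + 4)) (M := t + 1) le_self_add (by omega) (by omega)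
      (fun r hr => ?_) hbad⟩
  · rw [hz r (by omega), stage, if_pos (by omega)]
  · rw [add_assoc, hz _ (by omega), stage, if_neg (by omega), if_pos (by omega),
      Nat.add_sub_cancel_left]
  · rw [add_assoc, hz _ (by omega), stage, if_neg (by omega), if_neg (by omega),
      Nat.add_sub_cancel_left]

theorem exists_card_filter_le_lt_stageStart {u : ℕ → ℝ} (hu : ∀ i, 0 ≤ u i) (hε : 0 < ε)
    (h : Tendsto (fun n : ℕ => (∑ i ∈ range n, u i) / n) atTop (𝓝 0)) :
    ∃ n, #{i ∈ range (stageStart (n + 1)) | ε ≤ u i} < stageStart n := by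
  obtain ⟨N₀, hN₀⟩ := eventually_atTop.1
    (eventually_card_filter_le_lt hu hε (by norm_num : (0 : ℝ) < 1 / 14) h)
  refine ⟨N₀ + 1, ?_⟩
  have hlt := hN₀ (stageStart (N₀ + 1 + 1)) (by
    have := stageStart_strictMono.le_apply (x := N₀ + 1 + 1)
    omega)
  have ht : (1 : ℝ) ≤ stageStart (N₀ + 1) := by
    exact_mod_cast (Nat.succ_pos N₀).trans_le stageStart_strictMono.le_apply
  have hT : (stageStart (N₀ + 1 + 1) : ℝ) = 7 * stageStart (N₀ + 1) + 7 := by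
    rw [stageStart_succ]; push_cast; ring
  rw [hT] at hlt
  exact (Nat.cast_lt (α := ℝ)).1 (by linarith)

end Shadowing

theorem stmt17 {X : Type*} [MetricSpace X] [CompactSpace X] (f : X → X) (hf : Continuous f)
    (hsurj : Function.Surjective f)
    (haasp : ∀ x : ℕ → X,
      Filter.Tendsto (fun n : ℕ => (∑ i ∈ Finset.range n, dist (f (x i)) (x (i + 1))) / n)
        Filter.atTop (nhds 0) →
      ∃ z : X, Filter.Tendsto (fun n : ℕ => (∑ i ∈ Finset.range n, dist (f^[i] z) (x i)) / n)
        Filter.atTop (nhds 0)) :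
    ∀ x y : X, ∀ δ > 0, ∃ N : ℕ, ∀ k ≥ N,
      ∃ c : ℕ → X, c 0 = x ∧ c k = y ∧ ∀ i < k, dist (f (c i)) (c (i + 1)) ≤ δ := by
  intro x y δ hδ
  obtain ⟨ε, hε, hfε⟩ :=
    uniformContinuous_iff.1 (CompactSpace.uniformContinuous_of_continuous hf) δ hδ
  have hg := Function.rightInverse_surjInv hsurj
  obtain ⟨p, hp⟩ := haasp _ (tendsto_avg_dist_pseudoOrbit (x := x) (y := y) hg)
  obtain ⟨n, hn⟩ := exists_card_filter_le_lt_stageStart (fun _ => dist_nonneg) hε hp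
  obtain ⟨hxy, hyy, hyy'⟩ := hasChains_of_card_filter_lt hg hδ.le hfε hn
  exact ⟨_, fun k hk => hxy.of_loops hyy hyy' hk⟩
end

section
/- Let $X$ be a compact metric space and $f:X\to X$ a continuous map. If $f$ is chain mixing and has the shadowing property, then $f$ has the asymptotic average shadowing property: for every sequence $(x_i)_{i\ge0}$ in $X$ with $\lim_{n\to\infty}\frac{1}{n}\sum_{i=0}^{n-1}d(f(x_i),x_{i+1})=0$, there exists $x\in X$ with $\lim_{n\to\infty}\frac{1}{n}\sum_{i=0}^{n-1}d(f^i(x),x_i)=0$. -/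
open Filter Metric Set
open scoped Classical Topology

/-!
Fix scales `ε m = 2⁻ᵐ` with shadowing constants `δ m`. By compactness, chain mixing yields a
length `N m` after which any two points are joined by `δ m`-chains of every length. Since the
average jump of `x` tends to zero, the indices at most `N m` steps after a jump larger than `δ m`
form a set of density zero, and bridging each maximal run of them by a `δ m`-chain turns `x` into
a `δ m`-pseudo-orbit `y m`. Along block times `t m` chosen diagonally, shadow successively: the
`m`-th point follows the orbit of the previous one up to time `t m`, then is chained onto `y m`.
A limit point of these points stays within `2 ε m` of `x` on the `m`-th block outside a set of
density zero, so the Cesàro averages of its distance to `x` tend to zero.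
-/

section Chains

variable {X : Type*} [MetricSpace X] {f : X → X} {δ ε : ℝ}

def IsChainOfLength (f : X → X) (δ : ℝ) (k : ℕ) (c : ℕ → X) : Prop :=
  ∀ i < k, dist (f (c i)) (c (i + 1)) ≤ δ

def IsPseudoOrbit (f : X → X) (δ : ℝ) (y : ℕ → X) : Prop :=
  ∀ i, dist (f (y i)) (y (i + 1)) ≤ δ

def JoinedByChains (f : X → X) (δ : ℝ) (N : ℕ) : Prop :=
  ∀ u v : X, ∀ k ≥ N, ∃ c : ℕ → X, c 0 = u ∧ c k = v ∧ IsChainOfLength f δ k c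

def afterJumps (f : X → X) (x : ℕ → X) (δ : ℝ) (N : ℕ) : Set ℕ :=
  {i | ∃ j, δ < dist (f (x j)) (x (j + 1)) ∧ j < i ∧ i ≤ j + N}

lemma exists_isChainOfLength_one {p q : X} (h : dist (f p) q ≤ δ) :
    ∃ c : ℕ → X, c 0 = p ∧ c 1 = q ∧ IsChainOfLength f δ 1 c :=
  ⟨fun i => if i = 0 then p else q, rfl, rfl, fun i hi => by
    obtain rfl : i = 0 := by omega
    simpa using h⟩

lemma IsChainOfLength.of_dist_lt {k : ℕ} {c c' : ℕ → X} {η : ℝ}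
    (hfη : ∀ a b, dist a b < η → dist (f a) (f b) < ε) (hηε : η ≤ ε) (hc : IsChainOfLength f ε k c)
    (hcc' : ∀ i ≤ k, dist (c' i) (c i) < η) : IsChainOfLength f (3 * ε) k c' := fun i hi =>
  calc dist (f (c' i)) (c' (i + 1))
      ≤ dist (f (c' i)) (f (c i)) + dist (f (c i)) (c (i + 1)) + dist (c (i + 1)) (c' (i + 1)) :=
        dist_triangle4 _ _ _ _
    _ ≤ ε + ε + ε := by
        gcongr
        · exact (hfη _ _ (hcc' i hi.le)).le
        · exact hc i hi
        · rw [dist_comm]; exact (hcc' (i + 1) hi).le.trans hηε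
    _ = 3 * ε := by ring

theorem exists_joinedByChains [CompactSpace X] (hf : Continuous f)
    (hcm : ∀ x y : X, ∀ δ > 0, ∃ N : ℕ, ∀ k ≥ N,
      ∃ c : ℕ → X, c 0 = x ∧ c k = y ∧ IsChainOfLength f δ k c)
    (hδ : 0 < δ) : ∃ N, JoinedByChains f δ N := by
  obtain ⟨η, hη, hfη⟩ := Metric.uniformContinuous_iff.1
    (CompactSpace.uniformContinuous_of_continuous hf) (δ / 3) (by positivity)
  obtain ⟨s, -, hs, hcover⟩ :=
    finite_cover_balls_of_compact (isCompact_univ (X := X)) (lt_min hη (by positivity : 0 < δ / 3))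
  choose N₀ hN₀ using fun p q => hcm p q (δ / 3) (by positivity)
  obtain ⟨N, hN⟩ := ((hs.prod hs).image fun pq => N₀ pq.1 pq.2).bddAbove
  refine ⟨N + 1, fun u v k hk => ?_⟩
  obtain ⟨p, hp, hup⟩ := mem_iUnion₂.1 (hcover (mem_univ u))
  obtain ⟨q, hq, hvq⟩ := mem_iUnion₂.1 (hcover (mem_univ v))
  obtain ⟨c, hc0, hck, hc⟩ := hN₀ p q k ((hN ⟨(p, q), ⟨hp, hq⟩, rfl⟩).trans (by omega))
  have hk0 : k ≠ 0 := by omega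
  refine ⟨fun i => if i = 0 then u else if i = k then v else c i, by simp, by simp [hk0], ?_⟩
  have hclose : ∀ i ≤ k, dist (if i = 0 then u else if i = k then v else c i) (c i)
      < min η (δ / 3) := by
    intro i _
    split_ifs with h0 hik
    · rwa [h0, hc0]
    · rwa [hik, hck]
    · simpa using lt_min hη (by positivity : 0 < δ / 3)
  simpa [mul_div_cancel₀] using
    hc.of_dist_lt (fun a b hab => hfη (hab.trans_le (min_le_left _ _))) (min_le_right _ _) hclose

theorem exists_isPseudoOrbit_of_chains {G : Set ℕ} (h0 : 0 ∈ G) (hG : G.Infinite) (x : ℕ → X)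
    (hchain : ∀ a ∈ G, ∀ b ∈ G, a < b → (∀ j, a < j → j < b → j ∉ G) →
      ∃ c : ℕ → X, c 0 = x a ∧ c (b - a) = x b ∧ IsChainOfLength f δ (b - a) c) :
    ∃ y, IsPseudoOrbit f δ y ∧ ∀ i ∈ G, y i = x i := by
  have hnext : ∀ a, ∃ b, a < b ∧ b ∈ G := fun a =>
    (hG.exists_gt a).imp fun _ hb => ⟨hb.2, hb.1⟩
  let next a := Nat.find (hnext a)
  let prev i := Nat.findGreatest (· ∈ G) i
  have hnext_spec a : a < next a ∧ next a ∈ G := Nat.find_spec (hnext a)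
  have hnext_min a j (h₁ : a < j) (h₂ : j < next a) : j ∉ G := fun hj =>
    Nat.find_min (hnext a) h₂ ⟨h₁, hj⟩
  have hprev_mem i : prev i ∈ G := Nat.findGreatest_spec (Nat.zero_le i) h0
  have hprev_le i : prev i ≤ i := Nat.findGreatest_le i
  have : Nonempty X := ⟨x 0⟩
  choose! c hc0 hcb hc using fun a ha =>
    hchain a ha (next a) (hnext_spec a).2 (hnext_spec a).1 (hnext_min a)
  refine ⟨fun i => c (prev i) (i - prev i), fun i => ?_, fun i hi => ?_⟩
  · -- the `i`-th step is a step of the chain starting at `prev i`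
    have hlt : i < next (prev i) := by
      by_contra! h
      exact Nat.findGreatest_is_greatest (hnext_spec _).1 h (hnext_spec _).2
    have hsucc : c (prev (i + 1)) (i + 1 - prev (i + 1)) = c (prev i) (i + 1 - prev i) := by
      by_cases hi1 : i + 1 ∈ G
      · have hnext_eq : next (prev i) = i + 1 :=
          le_antisymm (not_lt.1 fun h => hnext_min _ _ (Nat.lt_succ_of_le (hprev_le i)) h hi1) hlt
        rw [show prev (i + 1) = i + 1 from Nat.findGreatest_eq hi1, Nat.sub_self,
          hc0 _ hi1, ← hnext_eq, hcb _ (hprev_mem i)]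
      · rw [show prev (i + 1) = prev i from Nat.findGreatest_of_not hi1]
    show dist (f (c (prev i) (i - prev i))) (c (prev (i + 1)) (i + 1 - prev (i + 1))) ≤ δ
    have := hprev_le i
    rw [hsucc, show i + 1 - prev i = i - prev i + 1 by omega]
    exact hc _ (hprev_mem i) _ (by omega)
  · show c (prev i) (i - prev i) = x i
    rw [show prev i = i from Nat.findGreatest_eq hi, Nat.sub_self, hc0 _ hi]

theorem exists_isPseudoOrbit_eq_off_afterJumps {x : ℕ → X} {N : ℕ} (hC : JoinedByChains f δ N)
    (hE : (afterJumps f x δ N)ᶜ.Infinite) :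
    ∃ y, IsPseudoOrbit f δ y ∧ ∀ i ∉ afterJumps f x δ N, y i = x i := by
  refine exists_isPseudoOrbit_of_chains (fun ⟨j, _, hj, _⟩ => by omega) hE x ?_
  intro a ha b hb hab hgap
  by_cases hk : N ≤ b - a
  · exact hC _ _ _ hk
  -- a short gap contains no index after a jump, so it is a single step
  have hstep : dist (f (x a)) (x (a + 1)) ≤ δ := not_lt.1 fun h => hb ⟨a, h, hab, by omega⟩
  obtain rfl : b = a + 1 := by
    by_contra hne
    obtain ⟨j, hj, hja, hjN⟩ := not_not.1 (hgap (a + 1) (lt_add_one a) (by omega))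
    obtain rfl | hja' : j = a ∨ j < a := by omega
    · exact (not_lt.2 hstep) hj
    · exact ha ⟨j, hj, hja', by omega⟩
  simpa using exists_isChainOfLength_one hstep

/-- `z` shadows the pseudo-orbit that follows the orbit of `w` up to time `T` and is then chained
onto `y`. -/
theorem exists_shadow_orbit_then_pseudoOrbit {N : ℕ}
    (hsh : ∀ y, IsPseudoOrbit f δ y → ∃ z, ∀ i, dist (f^[i] z) (y i) ≤ ε) (hδ : 0 ≤ δ)
    (hC : JoinedByChains f δ N) {y : ℕ → X} (hy : IsPseudoOrbit f δ y) (w : X) (T : ℕ) :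
    ∃ z, (∀ i < T, dist (f^[i] z) (f^[i] w) ≤ ε) ∧ ∀ i > T + N, dist (f^[i] z) (y i) ≤ ε := by
  set x : ℕ → X := fun i => if i ≤ T then f^[i] w else y i
  have hG : {i | i ≤ T ∨ T + N < i}.Infinite :=
    Set.infinite_of_forall_exists_gt fun a => ⟨a + T + N + 1, Or.inr (by omega), by omega⟩
  obtain ⟨Y, hY, hYx⟩ := exists_isPseudoOrbit_of_chains (Or.inl (Nat.zero_le T)) hG x <| by
    intro a ha b hb hab hgap
    have hb_succ (hb' : a + 1 ∈ {i | i ≤ T ∨ T + N < i}) : b = a + 1 := by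
      by_contra
      exact hgap (a + 1) (by omega) (by omega) hb'
    rcases lt_trichotomy a T with haT | rfl | haT
    · obtain rfl := hb_succ (Or.inl haT)
      simpa using exists_isChainOfLength_one (f := f) (δ := δ) (p := x a) (q := x (a + 1))
        (by simp [x, haT.le, Nat.succ_le_of_lt haT, Function.iterate_succ_apply', hδ])
    · obtain rfl : b = a + N + 1 := by
        rcases hb with hb | hb
        · omega
        · by_contra
          exact hgap (a + N + 1) (by omega) (by omega) (Or.inr (by omega))
      exact hC _ _ _ (by omega)
    · have haN : T + N < a := ha.resolve_left (by omega)
      obtain rfl := hb_succ (Or.inr (by omega))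
      simpa [x, show ¬ a ≤ T by omega, show ¬ a + 1 ≤ T by omega] using
        exists_isChainOfLength_one (hy a)
  obtain ⟨z, hz⟩ := hsh Y hY
  refine ⟨z, fun i hi => ?_, fun i hi => ?_⟩
  · simpa [hYx i (Or.inl hi.le), x, hi.le] using hz i
  · simpa [hYx i (Or.inr hi), x, show ¬ i ≤ T by omega] using hz i

/-- The `M`-th point follows the orbit of the previous one up to time `t M` within `ε M`; these
errors add up to less than `2 ε m` after stage `m`, and a cluster point inherits the bounds. -/
theorem exists_tracking_on_blocks [CompactSpace X] (hf : Continuous f) {ε : ℕ → ℝ}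
    (hε₀ : ∀ m, 0 ≤ ε m) (hε : ∀ m, 2 * ε (m + 1) ≤ ε m) {t N : ℕ → ℕ} (ht : Monotone t)
    (y : ℕ → ℕ → X)
    (hstage : ∀ m w T, ∃ z, (∀ i < T, dist (f^[i] z) (f^[i] w) ≤ ε m) ∧
      ∀ i > T + N m, dist (f^[i] z) (y m i) ≤ ε m) :
    ∃ z, ∀ m i, t m + N m < i → i < t (m + 1) → dist (f^[i] z) (y m i) ≤ 2 * ε m := by
  choose Z hZw hZy using hstage
  let z : ℕ → X := fun M => Nat.rec (Z 0 (y 0 0) (t 0)) (fun M zM => Z (M + 1) zM (t (M + 1))) M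
  have key : ∀ M m, m ≤ M → ∀ i, t m + N m < i → i < t (m + 1) →
      dist (f^[i] (z M)) (y m i) ≤ 2 * ε m - ε M := by
    intro M
    induction M with
    | zero =>
      intro m hm i h₁ _
      obtain rfl := Nat.le_zero.1 hm
      have := hZy 0 (y 0 0) (t 0) i h₁
      change dist (f^[i] (Z 0 (y 0 0) (t 0))) (y 0 i) ≤ _
      linarith
    | succ M ih =>
      intro m hm i h₁ h₂
      rcases hm.lt_or_eq with hm | rfl
      · have hi : i < t (M + 1) := h₂.trans_le (ht (by omega))
        calc dist (f^[i] (z (M + 1))) (y m i)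
            ≤ dist (f^[i] (z (M + 1))) (f^[i] (z M)) + dist (f^[i] (z M)) (y m i) :=
              dist_triangle _ _ _
          _ ≤ ε (M + 1) + (2 * ε m - ε M) :=
              add_le_add (hZw _ _ _ i hi) (ih m (by omega) i h₁ h₂)
          _ ≤ 2 * ε m - ε (M + 1) := by linarith [hε M]
      · linarith [hZy (M + 1) (z M) (t (M + 1)) i h₁]
  obtain ⟨z₀, -, φ, hφ, hlim⟩ := (isCompact_univ (X := X)).tendsto_subseq (x := z)
    fun _ => mem_univ _
  refine ⟨z₀, fun m i h₁ h₂ => le_of_tendsto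
    ((((hf.iterate i).tendsto z₀).comp hlim).dist tendsto_const_nhds) ?_⟩
  filter_upwards [eventually_ge_atTop m] with k hk
  exact (key (φ k) m (hk.trans (hφ.id_le k)) i h₁ h₂).trans (by linarith [hε₀ (φ k)])

end Chains

section Density

noncomputable def countBelow (A : Set ℕ) (n : ℕ) : ℕ :=
  ((Finset.range n).filter (· ∈ A)).card

def HasDensityZero (A : Set ℕ) : Prop :=
  Tendsto (fun n : ℕ => (countBelow A n : ℝ) / n) atTop (𝓝 0)

variable {A B : Set ℕ}

lemma hasDensityZero_iff :
    HasDensityZero A ↔ ∀ ζ > 0, ∀ᶠ n : ℕ in atTop, (countBelow A n : ℝ) ≤ ζ * n := by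
  refine ⟨fun hA ζ hζ => ?_, fun h => tendsto_order.2 ⟨fun b hb => Eventually.of_forall
    fun n => hb.trans_le (by positivity), fun ζ hζ => ?_⟩⟩
  · filter_upwards [Tendsto.eventually hA (gt_mem_nhds hζ), eventually_ge_atTop 1] with n h₁ h₂
    rw [div_lt_iff₀ (by exact_mod_cast h₂)] at h₁
    exact h₁.le
  · filter_upwards [h (ζ / 2) (half_pos hζ), eventually_ge_atTop 1] with n h₁ h₂
    rw [div_lt_iff₀ (by exact_mod_cast h₂)]
    nlinarith [(Nat.one_le_cast (α := ℝ)).2 h₂]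

lemma countBelow_mono (hBA : B ⊆ A) (n : ℕ) : countBelow B n ≤ countBelow A n :=
  Finset.card_le_card (Finset.monotone_filter_right _ fun _ _ h => hBA h)

lemma countBelow_union_le (n : ℕ) : countBelow (A ∪ B) n ≤ countBelow A n + countBelow B n := by
  refine (Finset.card_le_card fun i hi => ?_).trans (Finset.card_union_le _ _)
  simp only [Finset.mem_union, Finset.mem_filter, Set.mem_union] at hi ⊢
  tauto

lemma HasDensityZero.mono (hA : HasDensityZero A) (hBA : B ⊆ A) : HasDensityZero B :=
  squeeze_zero (fun _ => by positivity) (fun n => by gcongr; exact countBelow_mono hBA n) hA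

lemma HasDensityZero.union (hA : HasDensityZero A) (hB : HasDensityZero B) :
    HasDensityZero (A ∪ B) :=
  squeeze_zero (fun _ => by positivity)
    (fun n => show _ ≤ (countBelow A n : ℝ) / n + (countBelow B n : ℝ) / n by
      rw [← add_div]; gcongr; exact_mod_cast countBelow_union_le n)
    (by simpa using Tendsto.add hA hB)

lemma hasDensityZero_of_finite (hA : A.Finite) : HasDensityZero A :=
  squeeze_zero (fun _ => by positivity)
    (fun n => show _ ≤ (hA.toFinset.card : ℝ) / n by
      gcongr
      exact_mod_cast Finset.card_le_card fun i hi => hA.mem_toFinset.2 (Finset.mem_filter.1 hi).2)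
    (tendsto_const_div_atTop_nhds_zero_nat _)

lemma HasDensityZero.infinite_compl (hA : HasDensityZero A) : Aᶜ.Infinite := by
  intro hfin
  have hone : Tendsto (fun n : ℕ => (n : ℝ) / n) atTop (𝓝 1) :=
    tendsto_const_nhds.congr' <| by
      filter_upwards [eventually_ge_atTop 1] with n hn
      field_simp
  have hzero := hA.union (hasDensityZero_of_finite hfin)
  simp [HasDensityZero, countBelow] at hzero
  exact one_ne_zero (tendsto_nhds_unique hone hzero)

/-- Markov's inequality for Cesàro means. -/
lemma hasDensityZero_setOf_lt {a : ℕ → ℝ} (ha : ∀ i, 0 ≤ a i)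
    (hlim : Tendsto (fun n : ℕ => (∑ i ∈ Finset.range n, a i) / n) atTop (𝓝 0)) {δ : ℝ}
    (hδ : 0 < δ) : HasDensityZero {i | δ < a i} := by
  have hcount (n : ℕ) : (countBelow {i | δ < a i} n : ℝ) * δ ≤ ∑ i ∈ Finset.range n, a i :=
    calc (countBelow {i | δ < a i} n : ℝ) * δ
        = ∑ _i ∈ (Finset.range n).filter (· ∈ {i | δ < a i}), δ := by simp [countBelow]
      _ ≤ ∑ i ∈ (Finset.range n).filter (· ∈ {i | δ < a i}), a i :=
          Finset.sum_le_sum fun i hi => (Finset.mem_filter.1 hi).2.le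
      _ ≤ ∑ i ∈ Finset.range n, a i :=
          Finset.sum_le_sum_of_subset_of_nonneg (Finset.filter_subset _ _) fun i _ _ => ha i
  refine squeeze_zero (fun _ => by positivity) (fun n => ?_) (by simpa using hlim.div_const δ)
  rw [div_right_comm]
  gcongr
  rw [le_div_iff₀ hδ]
  exact hcount n

lemma HasDensityZero.setOf_exists_lt_le_add (hB : HasDensityZero B) (N : ℕ) :
    HasDensityZero {i | ∃ j ∈ B, j < i ∧ i ≤ j + N} := by
  have hcount (n : ℕ) : countBelow {i | ∃ j ∈ B, j < i ∧ i ≤ j + N} n ≤ N * countBelow B n :=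
    calc _ ≤ (((Finset.range n).filter (· ∈ B)).biUnion fun j => Finset.Ioc j (j + N)).card := by
          refine Finset.card_le_card fun i hi => ?_
          obtain ⟨hin, j, hjB, hji, hij⟩ := Finset.mem_filter.1 hi
          exact Finset.mem_biUnion.2 ⟨j, Finset.mem_filter.2
            ⟨Finset.mem_range.2 (hji.trans (Finset.mem_range.1 hin)), hjB⟩,
            Finset.mem_Ioc.2 ⟨hji, hij⟩⟩
      _ ≤ ∑ j ∈ (Finset.range n).filter (· ∈ B), (Finset.Ioc j (j + N)).card :=
          Finset.card_biUnion_le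
      _ = N * countBelow B n := by simp [countBelow, mul_comm]
  refine squeeze_zero (fun _ => by positivity) (fun n => ?_)
    (by simpa using Tendsto.const_mul (N : ℝ) hB)
  rw [mul_div_assoc']
  gcongr
  exact_mod_cast hcount n

theorem tendsto_cesaro_zero_of_hasDensityZero {a : ℕ → ℝ} {D : ℝ} (ha₀ : ∀ i, 0 ≤ a i)
    (haD : ∀ i, a i ≤ D) (ha : ∀ κ > 0, HasDensityZero {i | κ < a i}) :
    Tendsto (fun n : ℕ => (∑ i ∈ Finset.range n, a i) / n) atTop (𝓝 0) := by
  have hbound (κ : ℝ) (hκ : 0 ≤ κ) (n : ℕ) :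
      ∑ i ∈ Finset.range n, a i ≤ κ * n + D * countBelow {i | κ < a i} n :=
    calc ∑ i ∈ Finset.range n, a i
        ≤ ∑ i ∈ Finset.range n, (κ + if i ∈ {i | κ < a i} then D else 0) :=
          Finset.sum_le_sum fun i _ => by
            split_ifs with h
            · linarith [haD i]
            · simpa using h
      _ = κ * n + D * countBelow {i | κ < a i} n := by
          simp [Finset.sum_add_distrib, ← Finset.sum_filter, countBelow, mul_comm]
  refine tendsto_order.2 ⟨fun b hb => Eventually.of_forall fun n =>
    hb.trans_le (div_nonneg (Finset.sum_nonneg fun i _ => ha₀ i) n.cast_nonneg), fun b hb => ?_⟩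
  have hsmall := Tendsto.const_mul D (ha (b / 2) (half_pos hb))
  rw [mul_zero] at hsmall
  filter_upwards [hsmall.eventually (gt_mem_nhds (half_pos hb)), eventually_ge_atTop 1]
    with n h₁ h₂
  have hn : (0 : ℝ) < n := by exact_mod_cast h₂
  calc (∑ i ∈ Finset.range n, a i) / n
      ≤ (b / 2 * n + D * countBelow {i | b / 2 < a i} n) / n := by
        gcongr
        exact hbound _ (half_pos hb).le n
    _ = b / 2 + D * (countBelow {i | b / 2 < a i} n / n) := by field_simp
    _ < b := by linarith

lemma StrictMono.exists_le_lt_succ {t : ℕ → ℕ} (ht : StrictMono t) {n : ℕ} (hn : t 0 ≤ n) :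
    ∃ m, t m ≤ n ∧ n < t (m + 1) := by
  obtain ⟨m, h₁, h₂⟩ :=
    ht.exists_between_of_tendsto_atTop ht.tendsto_atTop (x := n + 1) (by omega)
  exact ⟨m, by omega, by omega⟩

lemma countBelow_iUnion_blocks_le {t : ℕ → ℕ} (ht : StrictMono t) (A : ℕ → Set ℕ)
    (L : ℕ → ℕ) {M n : ℕ} (hn : n < t (M + 1)) :
    countBelow (⋃ m, Icc (t m) (t m + L m) ∪ (A m ∩ Ici (t m))) n
      ≤ ∑ m ∈ Finset.range (M + 1), (L m + 1 + countBelow (A m) n) :=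
  calc _ ≤ ((Finset.range (M + 1)).biUnion fun m =>
        Finset.Icc (t m) (t m + L m) ∪ (Finset.range n).filter (· ∈ A m)).card := by
        refine Finset.card_le_card fun i hi => ?_
        obtain ⟨hin, hiS⟩ := Finset.mem_filter.1 hi
        obtain ⟨m, hm⟩ := mem_iUnion.1 hiS
        have htm : t m ≤ i := by rcases hm with h | h; exacts [h.1, h.2]
        have hmM : m < M + 1 :=
          ht.lt_iff_lt.1 (htm.trans_lt ((Finset.mem_range.1 hin).trans hn))
        simp only [Finset.mem_biUnion, Finset.mem_range, Finset.mem_union, Finset.mem_Icc,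
          Finset.mem_filter]
        exact ⟨m, hmM, hm.imp id fun h => ⟨Finset.mem_range.1 hin, h.1⟩⟩
    _ ≤ ∑ m ∈ Finset.range (M + 1),
          (Finset.Icc (t m) (t m + L m) ∪ (Finset.range n).filter (· ∈ A m)).card :=
        Finset.card_biUnion_le
    _ ≤ _ := Finset.sum_le_sum fun m _ =>
        (Finset.card_union_le _ _).trans (by simp [countBelow]; omega)

theorem exists_strictMono_hasDensityZero_iUnion (A : ℕ → Set ℕ)
    (hA : ∀ m, HasDensityZero (A m)) (L : ℕ → ℕ) :
    ∃ t : ℕ → ℕ, StrictMono t ∧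
      HasDensityZero (⋃ m, Icc (t m) (t m + L m) ∪ (A m ∩ Ici (t m))) := by
  have hT (M : ℕ) : ∃ T, ∀ n ≥ T, ∀ k ∈ Finset.range (M + 1),
      (countBelow (A k) n : ℝ) ≤ (((M : ℝ) + 1) ^ 2)⁻¹ * n :=
    eventually_atTop.1 <| (Finset.range (M + 1)).eventually_all.2 fun k _ =>
      hasDensityZero_iff.1 (hA k) _ (by positivity)
  choose T hT using hT
  -- `t M` dominates `T M` and `M + 1` times the total length of the first `M + 1` windows
  set Λ : ℕ → ℕ := fun M => ∑ k ∈ Finset.range (M + 1), (L k + 1)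
  set t : ℕ → ℕ := fun M => ∑ k ∈ Finset.range (M + 1), (T k + 1) + (M + 1) * Λ M
  have ht : StrictMono t := strictMono_nat_of_lt_succ fun M => by
    simp only [t, Λ, Finset.sum_range_succ _ (M + 1)]
    have := Nat.mul_le_mul (Nat.le_add_right (M + 1) 1)
      (Nat.le_add_right (∑ k ∈ Finset.range (M + 1), (L k + 1)) (L (M + 1) + 1))
    omega
  have hTt (M : ℕ) : T M ≤ t M := by
    have := Finset.single_le_sum (f := fun k => T k + 1) (fun _ _ => Nat.zero_le _)
      (Finset.self_mem_range_succ M)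
    simp only [t]
    omega
  refine ⟨t, ht, hasDensityZero_iff.2 fun ζ hζ => ?_⟩
  obtain ⟨M₀, hM₀⟩ := exists_nat_one_div_lt (half_pos hζ)
  filter_upwards [eventually_ge_atTop (t M₀)] with n hn
  obtain ⟨M, hMn, hnM⟩ := ht.exists_le_lt_succ ((ht.monotone (Nat.zero_le _)).trans hn)
  have hM₀M : M₀ ≤ M := Nat.lt_succ_iff.1 (ht.lt_iff_lt.1 (hn.trans_lt hnM))
  have hΛn : ((M : ℝ) + 1) * Λ M ≤ n := by exact_mod_cast (Nat.le_add_left _ _).trans hMn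
  have hinv : 2 * ((M : ℝ) + 1)⁻¹ ≤ ζ := by
    have : ((M : ℝ) + 1)⁻¹ ≤ 1 / (M₀ + 1) := by rw [one_div]; gcongr
    linarith
  calc (countBelow _ n : ℝ)
      ≤ ∑ m ∈ Finset.range (M + 1), (((L m + 1 : ℕ) : ℝ) + countBelow (A m) n) := by
        exact_mod_cast countBelow_iUnion_blocks_le ht A L hnM
    _ ≤ ∑ m ∈ Finset.range (M + 1), (((L m + 1 : ℕ) : ℝ) + (((M : ℝ) + 1) ^ 2)⁻¹ * n) := by
        gcongr with m hm
        exact hT M n ((hTt M).trans hMn) m hm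
    _ = Λ M + ((M : ℝ) + 1)⁻¹ * n := by
        rw [Finset.sum_add_distrib, Finset.sum_const, Finset.card_range, nsmul_eq_mul]
        push_cast [Λ]
        field_simp
    _ ≤ ((M : ℝ) + 1)⁻¹ * n + ((M : ℝ) + 1)⁻¹ * n := by
        gcongr
        rw [inv_mul_eq_div, le_div_iff₀ (by positivity)]
        linarith
    _ ≤ ζ * n := by nlinarith [(Nat.cast_nonneg n : (0 : ℝ) ≤ n)]

theorem hasDensityZero_setOf_lt_of_le_on_blocks {a : ℕ → ℝ} {t : ℕ → ℕ} (ht : StrictMono t)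
    {S : Set ℕ} (hS : HasDensityZero S) {η : ℕ → ℝ} (hη : Tendsto η atTop (𝓝 0))
    (h : ∀ m i, t m ≤ i → i < t (m + 1) → i ∉ S → a i ≤ η m) {κ : ℝ} (hκ : 0 < κ) :
    HasDensityZero {i | κ < a i} := by
  obtain ⟨m₀, hm₀⟩ := eventually_atTop.1 (hη.eventually (gt_mem_nhds hκ))
  refine ((hasDensityZero_of_finite (finite_Iio (t m₀))).union hS).mono fun i hi => ?_
  by_contra hiS
  simp only [mem_union, mem_Iio, not_or, not_lt] at hiS
  obtain ⟨m, hm, hm'⟩ := ht.exists_le_lt_succ ((ht.monotone (Nat.zero_le m₀)).trans hiS.1)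
  have hm₀m : m₀ ≤ m := Nat.lt_succ_iff.1 (ht.lt_iff_lt.1 (hiS.1.trans_lt hm'))
  exact (h m i hm hm' hiS.2).not_gt (hi.trans' (hm₀ m hm₀m))

end Density

theorem stmt18 {X : Type*} [MetricSpace X] [CompactSpace X] (f : X → X) (hf : Continuous f)
    (hcm : ∀ x y : X, ∀ δ > 0, ∃ N : ℕ, ∀ k ≥ N,
      ∃ c : ℕ → X, c 0 = x ∧ c k = y ∧ ∀ i < k, dist (f (c i)) (c (i + 1)) ≤ δ)
    (hsh : ∀ ε > 0, ∃ δ > 0, ∀ x : ℕ → X,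
      (∀ i : ℕ, dist (f (x i)) (x (i + 1)) ≤ δ) →
      ∃ z : X, ∀ i : ℕ, dist (f^[i] z) (x i) ≤ ε) :
    ∀ x : ℕ → X,
      Filter.Tendsto (fun n : ℕ => (∑ i ∈ Finset.range n, dist (f (x i)) (x (i + 1))) / n)
        Filter.atTop (nhds 0) →
      ∃ z : X, Filter.Tendsto (fun n : ℕ => (∑ i ∈ Finset.range n, dist (f^[i] z) (x i)) / n)
        Filter.atTop (nhds 0) := by
  intro x hx
  choose δ hδ hshadow using fun m : ℕ => hsh ((1 / 2) ^ m) (by positivity)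
  choose N hN using fun m => exists_joinedByChains hf hcm (hδ m)
  have hE (m : ℕ) : HasDensityZero (afterJumps f x (δ m) (N m)) :=
    (hasDensityZero_setOf_lt (fun _ => dist_nonneg) hx (hδ m)).setOf_exists_lt_le_add (N m)
  choose y hy hyx using fun m =>
    exists_isPseudoOrbit_eq_off_afterJumps (hN m) (hE m).infinite_compl
  obtain ⟨t, ht, hS⟩ := exists_strictMono_hasDensityZero_iUnion _ hE N
  obtain ⟨z, hz⟩ := exists_tracking_on_blocks hf (fun m => by positivity)
    (fun m => le_of_eq (by ring)) ht.monotone y fun m =>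
      exists_shadow_orbit_then_pseudoOrbit (hshadow m) (hδ m).le (hN m) (hy m)
  refine ⟨z, tendsto_cesaro_zero_of_hasDensityZero (fun _ => dist_nonneg)
    (fun _ => dist_le_diam_of_mem isCompact_univ.isBounded (mem_univ _) (mem_univ _))
    fun κ hκ => hasDensityZero_setOf_lt_of_le_on_blocks ht hS
      (η := fun m => 2 * (1 / 2) ^ m) ?_ ?_ hκ⟩
  · simpa using (tendsto_pow_atTop_nhds_zero_of_lt_one (by norm_num)
      (by norm_num : (1 / 2 : ℝ) < 1)).const_mul 2
  · intro m i hm hm' hiS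
    simp only [mem_iUnion, mem_union, mem_Icc, mem_inter_iff, mem_Ici, not_exists, not_or,
      not_and] at hiS
    rw [← hyx m i fun hi => (hiS m).2 hi hm]
    exact hz m i (by have := (hiS m).1 hm; omega) hm'
end
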